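/- arXiv:2309.08528 — 4 statements merged into one kernel-verified Lean document; each statement's English description precedes it below -/
import Mathlib

section
/- Let p be a prime, λ ≥ 1 an integer, and 0 ≤ j < ⌊λ/2⌋. Let α, β ∈ L' and let ℓ, m, n be integers such that m̃ := m/(2Δ) − q(α), ℓ̃ := ℓ/Δ − ⟨α,β⟩, and ñ := n/(2Δ) − q(β) are all integers. Define M_j*(p^k) = M_j(p^k) − M_{j+1}(p^k) for j < k ≤ λ. Then p·M_j*(p^λ) = M_j*(p^(λ−1)). -/
open scoped BigOperators Classical

noncomputable section

/-- The bilinear form `⟨x,y⟩ = xᵀ M y` on `ℚ^g`. -/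
def bform {g : ℕ} (M : Matrix (Fin g) (Fin g) ℤ) (x y : Fin g → ℚ) : ℚ :=
  dotProduct x (Matrix.mulVec (M.map (Int.cast : ℤ → ℚ)) y)

/-- The quadratic form `q(x) = ⟨x,x⟩/2`. -/
def qf {g : ℕ} (M : Matrix (Fin g) (Fin g) ℤ) (x : Fin g → ℚ) : ℚ :=
  bform M x x / 2

/-- Membership in the dual lattice `L' = {x : ⟨x,y⟩ ∈ ℤ for all y ∈ ℤ^g}`. -/
def IsDual {g : ℕ} (M : Matrix (Fin g) (Fin g) ℤ) (x : Fin g → ℚ) : Prop :=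
  ∀ y : Fin g → ℤ, ∃ z : ℤ, bform M x (fun i => (y i : ℚ)) = (z : ℚ)

/-- `e_c(x) = exp(2πix/c)`. -/
def ec (c : ℤ) (x : ℚ) : ℂ :=
  Complex.exp (2 * Real.pi * Complex.I * (x : ℂ) / (c : ℂ))

/-- Fundamental discriminant. -/
def IsFundDisc (D : ℤ) : Prop :=
  D ≠ 0 ∧ ((D % 4 = 1 ∧ Squarefree D) ∨
    ∃ D₀ : ℤ, D = 4 * D₀ ∧ Squarefree D₀ ∧ (D₀ % 4 = 2 ∨ D₀ % 4 = 3))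

/-- The Kronecker symbol at 2. -/
def kron2 (a : ℤ) : ℤ :=
  if a % 2 = 0 then 0 else if a % 8 = 1 ∨ a % 8 = 7 then 1 else -1

/-- The Kronecker symbol `(a|b)`. -/
def kron (a b : ℤ) : ℤ :=
  if b = 0 then (if a = 1 ∨ a = -1 then 1 else 0)
  else (if b < 0 ∧ a < 0 then -1 else 1) *
    kron2 a ^ (b.natAbs.factorization 2) *
    jacobiSym a (b.natAbs / 2 ^ (b.natAbs.factorization 2))

/-- The generalized Kloosterman sum `S_{α,β}(m,n,c)` (normalized by `i^σ`). -/
def Kloos {g : ℕ} (M : Matrix (Fin g) (Fin g) ℤ) (α β : Fin g → ℚ)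
    (m n : ℤ) (c : ℕ) : ℂ :=
  ((((Real.sqrt c) ^ g)⁻¹ * (Real.sqrt (M.det.natAbs))⁻¹ : ℝ) : ℂ) *
    ∑ d ∈ Finset.range c,
      if Nat.gcd d c = 1 then
        ∑ r : Fin g → Fin c,
          ec c (-((((d : ZMod c)⁻¹).val : ℚ) * qf M (fun i => α i + ((r i : ℕ) : ℚ)))
              + bform M β (fun i => α i + ((r i : ℕ) : ℚ))
              - (d : ℚ) * qf M β) *
          ec (2 * M.det * c) ((m : ℚ) * (((d : ZMod c)⁻¹).val : ℚ) + (n : ℚ) * (d : ℚ))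
      else 0

/-- `p*` as in Gross–Kohnen–Zagier. -/
def pstar (p : ℕ) (m : ℤ) : ℤ :=
  if p = 2 then
    (if (m / 2 ^ (m.natAbs.factorization 2)) % 4 = 1 then 1 else -1)
      * 2 ^ (m.natAbs.factorization 2)
  else if (p : ℤ) % 4 = 1 then (p : ℤ) else -(p : ℤ)

/-- The genus character `χ_m(Nc, ℓ, (ℓ²−mn)/(4Nc))`, via the GKZ product formula. -/
def chiGKZ (Δ m ℓ n : ℤ) (c : ℕ) : ℤ :=
  ∏ p ∈ c.primeFactors,
    if (p : ℤ) ∣ m then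
      kron (m / pstar p m) ((p : ℤ) ^ (c.factorization p + (2 * Δ).natAbs.factorization p)) *
        kron (pstar p m)
          ((ℓ ^ 2 - m * n) / (p : ℤ) ^ (c.factorization p + (2 * Δ).natAbs.factorization p))
    else kron m ((p : ℤ) ^ (c.factorization p))

/-- `f(v,r) = m̃v² − ⟨α,r⟩v − q(r) + ⟨β,r⟩ − ℓ̃v`. -/
def fval {g : ℕ} (M : Matrix (Fin g) (Fin g) ℤ) (α β : Fin g → ℚ)
    (ℓ m : ℤ) (v : ℤ) (r : Fin g → ℤ) : ℚ :=
  ((m : ℚ) / (2 * M.det) - qf M α) * (v : ℚ) ^ 2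
    - bform M α (fun i => (r i : ℚ)) * (v : ℚ)
    - qf M (fun i => (r i : ℚ))
    + bform M β (fun i => (r i : ℚ))
    - ((ℓ : ℚ) / (M.det : ℚ) - bform M α β) * (v : ℚ)

/-- `N(t)`: the number of solutions of `f(v,r) + ñ ≡ 0 (mod t)`. -/
def Ncount {g : ℕ} (M : Matrix (Fin g) (Fin g) ℤ) (α β : Fin g → ℚ)
    (ℓ m n : ℤ) (t : ℕ) : ℕ :=
  Nat.card {vr : Fin t × (Fin g → Fin t) //
    ∃ z : ℤ, fval M α β ℓ m ((vr.1 : ℕ) : ℤ) (fun i => ((vr.2 i : ℕ) : ℤ))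
        + ((n : ℚ) / (2 * M.det) - qf M β) = (z : ℚ) * (t : ℚ)}

/-- `M_j(p^k)` (with ambient modulus `p^λ`). -/
def Mcount {g : ℕ} (M : Matrix (Fin g) (Fin g) ℤ) (α β : Fin g → ℚ)
    (ℓ m n : ℤ) (p lam j k : ℕ) : ℕ :=
  Nat.card {vr : Fin (p ^ lam) × (Fin g → Fin (p ^ lam)) //
    (∃ z : ℤ, fval M α β ℓ m ((vr.1 : ℕ) : ℤ) (fun i => ((vr.2 i : ℕ) : ℤ))
        + ((n : ℚ) / (2 * M.det) - qf M β) = (z : ℚ) * (p : ℚ) ^ k) ∧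
    (∃ z : ℤ, 2 * ((m : ℚ) / (2 * M.det) - qf M α) * ((vr.1 : ℕ) : ℚ)
        - bform M α (fun i => ((vr.2 i : ℕ) : ℚ))
        - ((ℓ : ℚ) / (M.det : ℚ) - bform M α β) = (z : ℚ) * (p : ℚ) ^ j) ∧
    (∀ y : Fin g → ℤ, ∃ z : ℤ,
        bform M (fun i => α i * ((vr.1 : ℕ) : ℚ) + ((vr.2 i : ℕ) : ℚ) - β i)
          (fun i => (y i : ℚ)) = (z : ℚ) * (p : ℚ) ^ j)}

/-- The exponential sum `𝒮(d,u)`. -/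
def Ssum {g : ℕ} (M : Matrix (Fin g) (Fin g) ℤ) (α β : Fin g → ℚ)
    (ℓ m : ℤ) (d : ℤ) (u : ℕ) : ℂ :=
  ∑ v : Fin u, ∑ r : Fin g → Fin u,
    ec u ((d : ℚ) * fval M α β ℓ m ((v : ℕ) : ℤ) (fun i => ((r i : ℕ) : ℤ)))

/-- `ξ_{α,β}(ℓ,m,n,·)` at a prime power `p^λ`. -/
def xiP {g : ℕ} (M : Matrix (Fin g) (Fin g) ℤ) (α β : Fin g → ℚ)
    (ℓ m n : ℤ) (p lam : ℕ) : ℚ :=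
  if p = 2 ∨ ((p : ℤ) ∣ m ∧ (p : ℤ) ∣ M.det) then
    (if ((M.det.natAbs : ℤ) * (p : ℤ) ^ (2 * (lam / 2))) ∣ (ℓ ^ 2 - m * n) then
      ((Ncount M α β ℓ m n (p ^ lam) : ℚ)
          - (p : ℚ) ^ g * (Ncount M α β ℓ m n (p ^ (lam - 1)) : ℚ))
        / (p : ℚ) ^ (lam * ((g + 1) / 2))
    else 0)
  else if (p : ℤ) ∣ m then
    (if (p : ℤ) ^ lam ∣ (ℓ ^ 2 - m * n) then
      ((kron (((-4) ^ ((g - 1) / 2) * m) / pstar p m) ((p : ℤ) ^ lam)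
        * kron (pstar p m) ((ℓ ^ 2 - m * n) / (p : ℤ) ^ lam) : ℤ) : ℚ)
    else 0)
  else
    (if (p : ℤ) ^ (lam + (2 * M.det).natAbs.factorization p) ∣ (ℓ ^ 2 - m * n) then
      ((kron ((-4) ^ ((g - 1) / 2) * m) ((p : ℤ) ^ lam) : ℤ) : ℚ)
    else 0)

/-- The multiplicative function `ξ_{α,β}(ℓ,m,n,c)`. -/
def xi {g : ℕ} (M : Matrix (Fin g) (Fin g) ℤ) (α β : Fin g → ℚ)
    (ℓ m n : ℤ) (c : ℕ) : ℚ :=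
  ∏ p ∈ c.primeFactors, xiP M α β ℓ m n p (c.factorization p)

end


noncomputable section
namespace GKZaux
open Finset
variable {g : ℕ}


lemma bform_sum (M : Matrix (Fin g) (Fin g) ℤ) (x y : Fin g → ℚ) :
    bform M x y = ∑ i, ∑ j, x i * (M i j : ℚ) * y j := by
  unfold bform
  simp only [dotProduct, Matrix.mulVec, Matrix.map_apply, Finset.mul_sum]
  exact Finset.sum_congr rfl fun i _ => Finset.sum_congr rfl fun j _ => by ring

lemma exists_coeff (M : Matrix (Fin g) (Fin g) ℤ) (α : Fin g → ℚ) (hα : IsDual M α) :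
    ∃ a : Fin g → ℤ, ∀ y : Fin g → ℤ,
      bform M α (fun i => (y i : ℚ)) = ∑ j, (y j : ℚ) * (a j : ℚ) := by
  refine ⟨fun i => Classical.choose (hα (Pi.single i 1)), fun y => ?_⟩
  have hspec : ∀ i : Fin g, ((Classical.choose (hα (Pi.single i 1)) : ℤ) : ℚ)
      = ∑ k, α k * (M k i : ℚ) := by
    intro i
    rw [← Classical.choose_spec (hα (Pi.single i 1)), bform_sum]
    refine Finset.sum_congr rfl fun k _ => ?_
    rw [Finset.sum_eq_single i]
    · simp [Pi.single_apply]
    · intro b _ hb; simp [Pi.single_apply, hb, Ne.symm hb]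
    · simp
  rw [bform_sum, Finset.sum_comm]
  refine Finset.sum_congr rfl fun j _ => ?_
  rw [hspec j, Finset.mul_sum]
  refine Finset.sum_congr rfl fun k _ => by ring


open Finset
variable {g : ℕ}

def Bz (M : Matrix (Fin g) (Fin g) ℤ) (r s : Fin g → ℤ) : ℤ := ∑ i, ∑ j, r i * M i j * s j
def Av (a r : Fin g → ℤ) : ℤ := ∑ j, r j * a j
def Fz (M : Matrix (Fin g) (Fin g) ℤ) (mt lt nt : ℤ) (aα aβ : Fin g → ℤ)
    (v : ℤ) (r : Fin g → ℤ) : ℤ :=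
  mt * v ^ 2 - Av aα r * v - Bz M r r / 2 + Av aβ r - lt * v + nt
def Gz (mt lt : ℤ) (aα : Fin g → ℤ) (v : ℤ) (r : Fin g → ℤ) : ℤ :=
  2 * mt * v - Av aα r - lt
def Hz (M : Matrix (Fin g) (Fin g) ℤ) (aα aβ : Fin g → ℤ)
    (v : ℤ) (r : Fin g → ℤ) (i : Fin g) : ℤ :=
  v * aα i + (∑ k, r k * M k i) - aβ i

lemma Bz_symm (M : Matrix (Fin g) (Fin g) ℤ) (hs : M.IsSymm) (r s : Fin g → ℤ) :
    Bz M r s = Bz M s r := by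
  unfold Bz
  rw [Finset.sum_comm]
  refine Finset.sum_congr rfl fun j _ => Finset.sum_congr rfl fun i _ => ?_
  rw [← hs.apply i j]
  ring

lemma Av_lin (a r s : Fin g → ℤ) (t : ℤ) :
    Av a (fun i => r i + t * s i) = Av a r + t * Av a s := by
  unfold Av
  rw [Finset.mul_sum, ← Finset.sum_add_distrib]
  exact Finset.sum_congr rfl fun j _ => by ring

lemma Bz_expand (M : Matrix (Fin g) (Fin g) ℤ) (r s : Fin g → ℤ) (t : ℤ) :
    Bz M (fun i => r i + t * s i) (fun i => r i + t * s i)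
      = Bz M r r + t * (Bz M r s + Bz M s r) + t ^ 2 * Bz M s s := by
  unfold Bz
  have h : ∀ i j : Fin g, (r i + t * s i) * M i j * (r j + t * s j)
      = r i * M i j * r j + t * (r i * M i j * s j + s i * M i j * r j)
        + t ^ 2 * (s i * M i j * s j) := fun i j => by ring
  simp_rw [h, mul_add, Finset.mul_sum, Finset.sum_add_distrib]

lemma even_Bz (M : Matrix (Fin g) (Fin g) ℤ) (hs : M.IsSymm) (hd : ∀ i, Even (M i i))
    (r : Fin g → ℤ) : Even (Bz M r r) := by
  have : ((Bz M r r : ℤ) : ZMod 2) = 0 := by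
    unfold Bz
    push_cast
    rw [← Finset.sum_product']
    refine Finset.sum_involution (fun x _ => x.swap) ?_ ?_ (fun a _ => Finset.mem_univ _)
      (fun a _ => Prod.swap_swap a)
    · intro x _
      have hsym : M x.2 x.1 = M x.1 x.2 := hs.apply x.1 x.2
      have h2 : (2 : ZMod 2) = 0 := by decide
      calc (r x.1 : ZMod 2) * (M x.1 x.2 : ℤ) * (r x.2 : ZMod 2)
            + (r x.2 : ZMod 2) * ((M x.2 x.1 : ℤ) : ZMod 2) * (r x.1 : ZMod 2)
          = 2 * ((r x.1 : ZMod 2) * (M x.1 x.2 : ℤ) * (r x.2 : ZMod 2)) := by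
            rw [hsym]; ring
        _ = 0 := by rw [h2, zero_mul]
    · intro x _ hx
      intro heq
      apply hx
      have h12 : x.2 = x.1 := congrArg Prod.fst heq
      have : ((M x.1 x.2 : ℤ) : ZMod 2) = 0 := by
        rw [h12]
        rw [ZMod.intCast_zmod_eq_zero_iff_dvd]
        exact_mod_cast (even_iff_two_dvd.mp (hd x.1))
      rw [this, mul_zero, zero_mul]
  rw [even_iff_two_dvd]
  have := (ZMod.intCast_zmod_eq_zero_iff_dvd (Bz M r r) 2).mp this
  exact_mod_cast this


lemma sum_s_Hz (M : Matrix (Fin g) (Fin g) ℤ) (aα aβ : Fin g → ℤ)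
    (v : ℤ) (r s : Fin g → ℤ) :
    (∑ i, s i * Hz M aα aβ v r i) = v * Av aα s + Bz M r s - Av aβ s := by
  unfold Hz Av Bz
  have hpt : ∀ i : Fin g, s i * (v * aα i + (∑ k, r k * M k i) - aβ i)
      = v * (s i * aα i) + (∑ k, r k * M k i * s i) - s i * aβ i := by
    intro i
    have h1 : s i * (∑ k, r k * M k i) = ∑ k, r k * M k i * s i := by
      rw [Finset.mul_sum]; exact Finset.sum_congr rfl fun k _ => by ring
    linear_combination h1
  simp_rw [hpt]
  rw [Finset.sum_sub_distrib, Finset.sum_add_distrib, ← Finset.mul_sum, Finset.sum_comm]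

lemma two_ne_zero' : (2 : ℤ) ≠ 0 := by norm_num

lemma Fz_expand (M : Matrix (Fin g) (Fin g) ℤ) (hs : M.IsSymm) (hd : ∀ i, Even (M i i))
    (mt lt nt : ℤ) (aα aβ : Fin g → ℤ) (v w t : ℤ) (r s : Fin g → ℤ) :
    Fz M mt lt nt aα aβ (v + t * w) (fun i => r i + t * s i)
      = Fz M mt lt nt aα aβ v r
        + t * (w * Gz mt lt aα v r - ∑ i, s i * Hz M aα aβ v r i)
        + t ^ 2 * (mt * w ^ 2 - Av aα s * w - Bz M s s / 2) := by
  obtain ⟨qr, hqr⟩ := even_Bz M hs hd r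
  obtain ⟨qs, hqs⟩ := even_Bz M hs hd s
  have hqr' : Bz M r r = 2 * qr := by rw [hqr]; ring
  have hqs' : Bz M s s = 2 * qs := by rw [hqs]; ring
  have hdr : Bz M r r / 2 = qr := by rw [hqr']; exact Int.mul_ediv_cancel_left _ two_ne_zero'
  have hds : Bz M s s / 2 = qs := by rw [hqs']; exact Int.mul_ediv_cancel_left _ two_ne_zero'
  have hexp : Bz M (fun i => r i + t * s i) (fun i => r i + t * s i)
      = 2 * (qr + t * Bz M r s + t ^ 2 * qs) := by
    rw [Bz_expand, Bz_symm M hs s r, hqr', hqs']; ring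
  have hdiv : Bz M (fun i => r i + t * s i) (fun i => r i + t * s i) / 2
      = qr + t * Bz M r s + t ^ 2 * qs := by
    rw [hexp]; exact Int.mul_ediv_cancel_left _ two_ne_zero'
  unfold Fz Gz
  rw [hdiv, hdr, hds, Av_lin, Av_lin, sum_s_Hz]
  ring

lemma Gz_expand (mt lt : ℤ) (aα : Fin g → ℤ) (v w t : ℤ) (r s : Fin g → ℤ) :
    Gz mt lt aα (v + t * w) (fun i => r i + t * s i)
      = Gz mt lt aα v r + t * (2 * mt * w - Av aα s) := by
  unfold Gz
  rw [Av_lin]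
  ring

lemma Hz_expand (M : Matrix (Fin g) (Fin g) ℤ) (aα aβ : Fin g → ℤ)
    (v w t : ℤ) (r s : Fin g → ℤ) (i : Fin g) :
    Hz M aα aβ (v + t * w) (fun k => r k + t * s k) i
      = Hz M aα aβ v r i + t * (w * aα i + ∑ k, s k * M k i) := by
  unfold Hz
  have : (∑ k, (r k + t * s k) * M k i) = (∑ k, r k * M k i) + t * ∑ k, s k * M k i := by
    rw [Finset.mul_sum, ← Finset.sum_add_distrib]
    exact Finset.sum_congr rfl fun k _ => by ring
  rw [this]
  ring




lemma card_prod_subtype {A B : Type} [Fintype A] [Fintype B] (P : A × B → Prop) :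
    Nat.card {x : A × B // P x} = ∑ a : A, Nat.card {b : B // P (a, b)} := by
  have e1 : {x : A × B // P x} ≃ {x : A × B // P (x.1, x.2)} :=
    Equiv.subtypeEquivRight (fun x => by simp)
  rw [Nat.card_congr (e1.trans (Equiv.subtypeProdEquivSigmaSubtype (fun a b => P (a, b))))]
  rw [Nat.card_eq_fintype_card, Fintype.card_sigma]
  exact Finset.sum_congr rfl fun a _ => (Nat.card_eq_fintype_card).symm

lemma card_prod_subtype' {A B : Type} [Fintype A] [Fintype B] (P : A × B → Prop) :
    Nat.card {x : A × B // P x} = ∑ b : B, Nat.card {a : A // P (a, b)} := by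
  have e1 : {x : A × B // P x} ≃ {x : B × A // P (x.2, x.1)} :=
    ⟨fun x => ⟨⟨x.1.2, x.1.1⟩, x.2⟩, fun x => ⟨⟨x.1.2, x.1.1⟩, x.2⟩,
      fun x => by rfl, fun x => by rfl⟩
  rw [Nat.card_congr e1, card_prod_subtype]

lemma count_cong (p : ℕ) (hp : 1 < p) (e : ℕ) (z : ZMod p) :
    Nat.card {x : Fin (p ^ (e + 1)) // ((x : ℕ) : ZMod p) = z} = p ^ e := by
  haveI : NeZero p := ⟨by omega⟩
  have hzlt : z.val < p := ZMod.val_lt z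
  have hppos : 0 < p := by omega
  have e1 : {x : Fin (p ^ (e + 1)) // ((x : ℕ) : ZMod p) = z} ≃ Fin (p ^ e) := by
    refine ⟨fun x => ⟨(x : ℕ) / p, ?_⟩, fun y => ⟨⟨z.val + p * y, ?_⟩, ?_⟩, ?_, ?_⟩
    · rw [Nat.div_lt_iff_lt_mul hppos, ← pow_succ]
      exact x.1.isLt
    · have : z.val + p * (y : ℕ) < p + p * (p ^ e - 1) := by
        have := y.isLt
        have : (y : ℕ) ≤ p ^ e - 1 := by omega
        have h2 : p * (y : ℕ) ≤ p * (p ^ e - 1) := Nat.mul_le_mul_left p this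
        omega
      have hpe : 0 < p ^ e := Nat.pow_pos hppos
      have hms : p * (p ^ e - 1) = p * p ^ e - p := by rw [Nat.mul_sub, mul_one]
      have hle : p ≤ p * p ^ e := Nat.le_mul_of_pos_right p hpe
      have hps : p ^ (e + 1) = p * p ^ e := by rw [pow_succ]; ring
      omega
    · show (((z.val + p * (y : ℕ)) : ℕ) : ZMod p) = z
      push_cast
      simp [ZMod.natCast_self, ZMod.natCast_val, ZMod.cast_id]
    · intro x
      apply Subtype.ext
      apply Fin.ext
      show z.val + p * ((x : ℕ) / p) = (x : ℕ)
      have hmod : (x : ℕ) % p = z.val := by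
        have h2 := x.2
        have h3 : (((x : ℕ) : ZMod p)).val = z.val := by rw [h2]
        rwa [ZMod.val_natCast] at h3
      have := Nat.mod_add_div ((x : ℕ)) p
      omega
    · intro y
      apply Fin.ext
      show (z.val + p * (y : ℕ)) / p = (y : ℕ)
      rw [Nat.add_mul_div_left _ _ hppos, Nat.div_eq_of_lt hzlt, zero_add]
  rw [Nat.card_congr e1, Nat.card_eq_fintype_card, Fintype.card_fin]


lemma count_affine {ι : Type} [Fintype ι] [DecidableEq ι] (p : ℕ) (hp : p.Prime) (e : ℕ)
    (w : ι → ZMod p) (c : ZMod p) (i₀ : ι) (h : w i₀ ≠ 0) :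
    p * Nat.card {s : ι → Fin (p ^ (e + 1)) //
        c + ∑ i, w i * ((s i : ℕ) : ZMod p) = 0}
      = (p ^ (e + 1)) ^ (Fintype.card ι) := by
  haveI : Fact p.Prime := ⟨hp⟩
  have hsum : ∀ s : ι → Fin (p ^ (e + 1)), (∑ i, w i * ((s i : ℕ) : ZMod p))
      = w i₀ * ((s i₀ : ℕ) : ZMod p) + ∑ i : {i // i ≠ i₀}, w i * ((s i : ℕ) : ZMod p) := by
    intro s
    rw [← Finset.add_sum_erase Finset.univ _ (Finset.mem_univ i₀)]
    congr 1
    exact (Finset.sum_subtype (Finset.univ.erase i₀)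
      (fun x => by simp [Finset.mem_erase]) _)
  have key : ∀ s : ι → Fin (p ^ (e + 1)),
      (c + ∑ i, w i * ((s i : ℕ) : ZMod p) = 0)
        ↔ ((s i₀ : ℕ) : ZMod p)
            = (-(c + ∑ i : {i // i ≠ i₀}, w i * ((s i : ℕ) : ZMod p))) * (w i₀)⁻¹ := by
    intro s
    rw [hsum s]
    constructor
    · intro H
      have h1 : w i₀ * ((s i₀ : ℕ) : ZMod p)
          = -(c + ∑ i : {i // i ≠ i₀}, w i * ((s i : ℕ) : ZMod p)) := by
        linear_combination H
      calc ((s i₀ : ℕ) : ZMod p) = (w i₀)⁻¹ * (w i₀ * ((s i₀ : ℕ) : ZMod p)) :=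
            (inv_mul_cancel_left₀ h _).symm
        _ = (-(c + ∑ i : {i // i ≠ i₀}, w i * ((s i : ℕ) : ZMod p))) * (w i₀)⁻¹ := by
            rw [h1]; ring
    · intro H
      rw [H]
      field_simp
      ring
  have e2 : {s : ι → Fin (p ^ (e + 1)) // c + ∑ i, w i * ((s i : ℕ) : ZMod p) = 0}
      ≃ {x : Fin (p ^ (e + 1)) × ({i // i ≠ i₀} → Fin (p ^ (e + 1))) //
          ((x.1 : ℕ) : ZMod p)
            = (-(c + ∑ i : {i // i ≠ i₀}, w i * ((x.2 i : ℕ) : ZMod p))) * (w i₀)⁻¹} := by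
    refine Equiv.subtypeEquiv (Equiv.piSplitAt i₀ (fun _ => Fin (p ^ (e + 1)))) ?_
    intro s
    rw [key s]
    simp [Equiv.piSplitAt]
  rw [Nat.card_congr e2, card_prod_subtype']
  have hinner : ∀ b : {i // i ≠ i₀} → Fin (p ^ (e + 1)),
      Nat.card {a : Fin (p ^ (e + 1)) // ((a : ℕ) : ZMod p)
        = (-(c + ∑ i : {i // i ≠ i₀}, w i * ((b i : ℕ) : ZMod p))) * (w i₀)⁻¹} = p ^ e :=
    fun b => count_cong p hp.one_lt e _
  simp_rw [hinner]
  rw [Finset.sum_const, Finset.card_univ, smul_eq_mul]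
  rw [Fintype.card_fun, Fintype.card_fin]
  have hne : Fintype.card {i // i ≠ i₀} = Fintype.card ι - 1 := by
    have h1 := Fintype.card_subtype_compl (fun i : ι => i = i₀)
    rw [Fintype.card_subtype_eq] at h1
    convert h1 using 2
  rw [hne]
  have hpos : 1 ≤ Fintype.card ι := Fintype.card_pos_iff.mpr ⟨i₀⟩
  have hcι : Fintype.card ι = (Fintype.card ι - 1) + 1 := by omega
  calc p * ((p ^ (e + 1)) ^ (Fintype.card ι - 1) * p ^ e)
      = (p ^ (e + 1)) ^ (Fintype.card ι - 1) * p ^ (e + 1) := by rw [pow_succ]; ring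
    _ = (p ^ (e + 1)) ^ ((Fintype.card ι - 1) + 1) := (pow_succ _ _).symm
    _ = (p ^ (e + 1)) ^ (Fintype.card ι) := by rw [← hcι]


open Finset
variable {g : ℕ}

lemma cast_Bz (M : Matrix (Fin g) (Fin g) ℤ) (r s : Fin g → ℤ) :
    ((Bz M r s : ℤ) : ℚ) = bform M (fun i => (r i : ℚ)) (fun i => (s i : ℚ)) := by
  rw [bform_sum]; unfold Bz; push_cast; rfl

lemma cast_Av (M : Matrix (Fin g) (Fin g) ℤ) (α : Fin g → ℚ) (a : Fin g → ℤ)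
    (ha : ∀ y : Fin g → ℤ, bform M α (fun i => (y i : ℚ)) = ∑ j, (y j : ℚ) * (a j : ℚ))
    (r : Fin g → ℤ) :
    ((Av a r : ℤ) : ℚ) = bform M α (fun i => (r i : ℚ)) := by
  rw [ha r]; unfold Av; push_cast; rfl

lemma cast_Q (M : Matrix (Fin g) (Fin g) ℤ) (hs : M.IsSymm) (hd : ∀ i, Even (M i i))
    (r : Fin g → ℤ) :
    ((Bz M r r / 2 : ℤ) : ℚ) = qf M (fun i => (r i : ℚ)) := by
  obtain ⟨q, hq⟩ := even_Bz M hs hd r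
  have h2 : Bz M r r = 2 * q := by rw [hq]; ring
  have : Bz M r r / 2 = q := by rw [h2]; exact Int.mul_ediv_cancel_left _ (by norm_num)
  rw [this]
  unfold qf
  rw [← cast_Bz, h2]
  push_cast
  ring

lemma cast_Fz (M : Matrix (Fin g) (Fin g) ℤ) (hs : M.IsSymm) (hd : ∀ i, Even (M i i))
    (α β : Fin g → ℚ) (ℓ m n : ℤ) (mt lt nt : ℤ) (aα aβ : Fin g → ℤ)
    (hmt : (m : ℚ) / (2 * M.det) - qf M α = (mt : ℚ))
    (hlt : (ℓ : ℚ) / (M.det : ℚ) - bform M α β = (lt : ℚ))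
    (hnt : (n : ℚ) / (2 * M.det) - qf M β = (nt : ℚ))
    (haα : ∀ y : Fin g → ℤ, bform M α (fun i => (y i : ℚ)) = ∑ j, (y j : ℚ) * (aα j : ℚ))
    (haβ : ∀ y : Fin g → ℤ, bform M β (fun i => (y i : ℚ)) = ∑ j, (y j : ℚ) * (aβ j : ℚ))
    (v : ℤ) (r : Fin g → ℤ) :
    ((Fz M mt lt nt aα aβ v r : ℤ) : ℚ)
      = fval M α β ℓ m v r + ((n : ℚ) / (2 * M.det) - qf M β) := by
  unfold Fz fval
  push_cast
  rw [cast_Q M hs hd r, cast_Av M α aα haα r, cast_Av M β aβ haβ r, ← hmt, ← hlt, ← hnt]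
  rw [Int.cast_det]

lemma cast_Gz (M : Matrix (Fin g) (Fin g) ℤ)
    (α β : Fin g → ℚ) (ℓ m : ℤ) (mt lt : ℤ) (aα : Fin g → ℤ)
    (hmt : (m : ℚ) / (2 * M.det) - qf M α = (mt : ℚ))
    (hlt : (ℓ : ℚ) / (M.det : ℚ) - bform M α β = (lt : ℚ))
    (haα : ∀ y : Fin g → ℤ, bform M α (fun i => (y i : ℚ)) = ∑ j, (y j : ℚ) * (aα j : ℚ))
    (v : ℤ) (r : Fin g → ℤ) :
    ((Gz mt lt aα v r : ℤ) : ℚ)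
      = 2 * ((m : ℚ) / (2 * M.det) - qf M α) * (v : ℚ)
        - bform M α (fun i => (r i : ℚ)) - ((ℓ : ℚ) / (M.det : ℚ) - bform M α β) := by
  unfold Gz
  push_cast
  rw [cast_Av M α aα haα r, ← hmt, ← hlt]
  rw [Int.cast_det]

lemma cast_H (M : Matrix (Fin g) (Fin g) ℤ)
    (α β : Fin g → ℚ) (mt lt : ℤ) (aα aβ : Fin g → ℤ)
    (haα : ∀ y : Fin g → ℤ, bform M α (fun i => (y i : ℚ)) = ∑ j, (y j : ℚ) * (aα j : ℚ))
    (haβ : ∀ y : Fin g → ℤ, bform M β (fun i => (y i : ℚ)) = ∑ j, (y j : ℚ) * (aβ j : ℚ))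
    (v : ℤ) (r : Fin g → ℤ) (y : Fin g → ℤ) :
    bform M (fun i => α i * (v : ℚ) + ((r i : ℤ) : ℚ) - β i) (fun i => (y i : ℚ))
      = ∑ i, (y i : ℚ) * ((Hz M aα aβ v r i : ℤ) : ℚ) := by
  rw [bform_sum]
  have h1 : ∀ i j : Fin g, (α i * (v : ℚ) + ((r i : ℤ) : ℚ) - β i) * (M i j : ℚ) * (y j : ℚ)
      = (v : ℚ) * (α i * (M i j : ℚ) * (y j : ℚ)) + ((r i : ℚ) * (M i j : ℚ) * (y j : ℚ))
        - (β i * (M i j : ℚ) * (y j : ℚ)) := fun i j => by push_cast; ring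
  simp_rw [h1, Finset.sum_sub_distrib, Finset.sum_add_distrib, ← Finset.mul_sum]
  have h2 : (∑ i, ∑ j, α i * (M i j : ℚ) * (y j : ℚ)) = ∑ j, (y j : ℚ) * (aα j : ℚ) := by
    rw [← bform_sum, haα]
  have h3 : (∑ i, ∑ j, β i * (M i j : ℚ) * (y j : ℚ)) = ∑ j, (y j : ℚ) * (aβ j : ℚ) := by
    rw [← bform_sum, haβ]
  have h4 : (∑ i, ∑ j, ((r i : ℤ) : ℚ) * (M i j : ℚ) * (y j : ℚ))
      = ∑ j, (y j : ℚ) * ((∑ k, r k * M k j : ℤ) : ℚ) := by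
    rw [Finset.sum_comm]
    refine Finset.sum_congr rfl fun j _ => ?_
    push_cast
    rw [Finset.mul_sum]
    exact Finset.sum_congr rfl fun i _ => by ring
  rw [h2, h3, h4]
  unfold Hz
  rw [Finset.mul_sum, ← Finset.sum_add_distrib, ← Finset.sum_sub_distrib]
  refine Finset.sum_congr rfl fun i _ => ?_
  push_cast
  ring

lemma exists_cast_iff_dvd (p : ℕ) (C : ℤ) (k : ℕ) :
    (∃ z : ℤ, (C : ℚ) = (z : ℚ) * (p : ℚ) ^ k) ↔ (p : ℤ) ^ k ∣ C := by
  constructor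
  · rintro ⟨z, hz⟩
    refine ⟨z, ?_⟩
    have : (C : ℚ) = (((p : ℤ) ^ k * z : ℤ) : ℚ) := by push_cast; rw [hz]; ring
    exact_mod_cast this
  · rintro ⟨z, hz⟩
    exact ⟨z, by rw [hz]; push_cast; ring⟩


open Finset
variable {g : ℕ}

lemma dvd_add_cancel (d x y : ℤ) (h : d ∣ y) : d ∣ x + y ↔ d ∣ x :=
  ⟨fun H => by have := H.sub h; simpa using this, fun H => H.add h⟩

def fibCond (M : Matrix (Fin g) (Fin g) ℤ) (p : ℕ) (mt lt nt : ℤ) (aα aβ : Fin g → ℤ)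
    (tz v₀ : ℤ) (r₀ : Fin g → ℤ) (K k jj : ℕ) (u : Fin K × (Fin g → Fin K)) : Prop :=
  (p : ℤ) ^ k ∣ Fz M mt lt nt aα aβ (v₀ + tz * ((u.1 : ℕ) : ℤ))
      (fun i => r₀ i + tz * ((u.2 i : ℕ) : ℤ))
  ∧ (p : ℤ) ^ jj ∣ Gz mt lt aα (v₀ + tz * ((u.1 : ℕ) : ℤ))
      (fun i => r₀ i + tz * ((u.2 i : ℕ) : ℤ))
  ∧ ∀ i2, (p : ℤ) ^ jj ∣ Hz M aα aβ (v₀ + tz * ((u.1 : ℕ) : ℤ))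
      (fun i => r₀ i + tz * ((u.2 i : ℕ) : ℤ)) i2

lemma fiber_core (M : Matrix (Fin g) (Fin g) ℤ) (hs : M.IsSymm) (hd : ∀ i, Even (M i i))
    (p : ℕ) (hp : p.Prime) (lam j : ℕ) (h2j : 2 * j + 2 ≤ lam)
    (mt lt nt : ℤ) (aα aβ : Fin g → ℤ) (tz v₀ : ℤ) (r₀ : Fin g → ℤ)
    (htz1 : (p : ℤ) ^ (j + 1) ∣ tz)
    (htz2 : tz * (p : ℤ) ^ j = (p : ℤ) ^ (lam - 1))
    (htz3 : (p : ℤ) ^ lam ∣ tz ^ 2) :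
    (p : ℤ) * ((Nat.card {u : Fin (p ^ (j+1)) × (Fin g → Fin (p ^ (j+1))) //
          fibCond M p mt lt nt aα aβ tz v₀ r₀ (p ^ (j+1)) lam j u} : ℤ)
        - (Nat.card {u : Fin (p ^ (j+1)) × (Fin g → Fin (p ^ (j+1))) //
          fibCond M p mt lt nt aα aβ tz v₀ r₀ (p ^ (j+1)) lam (j+1) u} : ℤ))
      = (Nat.card {u : Fin (p ^ (j+1)) × (Fin g → Fin (p ^ (j+1))) //
          fibCond M p mt lt nt aα aβ tz v₀ r₀ (p ^ (j+1)) (lam - 1) j u} : ℤ)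
        - (Nat.card {u : Fin (p ^ (j+1)) × (Fin g → Fin (p ^ (j+1))) //
          fibCond M p mt lt nt aα aβ tz v₀ r₀ (p ^ (j+1)) (lam - 1) (j+1) u} : ℤ) := by
  haveI : Fact p.Prime := ⟨hp⟩
  have hpz : (p : ℤ) ≠ 0 := by exact_mod_cast hp.pos.ne'
  have hGinv : ∀ (u : Fin (p ^ (j+1)) × (Fin g → Fin (p ^ (j+1)))) (e : ℕ), e ≤ j + 1 →
      ((p : ℤ) ^ e ∣ Gz mt lt aα (v₀ + tz * ((u.1 : ℕ) : ℤ))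
          (fun i => r₀ i + tz * ((u.2 i : ℕ) : ℤ))
        ↔ (p : ℤ) ^ e ∣ Gz mt lt aα v₀ r₀) := by
    intro u e he
    rw [Gz_expand]
    exact dvd_add_cancel _ _ _ (((pow_dvd_pow (p : ℤ) he).trans htz1).mul_right _)
  have hHinv : ∀ (u : Fin (p ^ (j+1)) × (Fin g → Fin (p ^ (j+1)))) (i2 : Fin g) (e : ℕ),
      e ≤ j + 1 →
      ((p : ℤ) ^ e ∣ Hz M aα aβ (v₀ + tz * ((u.1 : ℕ) : ℤ))
          (fun i => r₀ i + tz * ((u.2 i : ℕ) : ℤ)) i2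
        ↔ (p : ℤ) ^ e ∣ Hz M aα aβ v₀ r₀ i2) := by
    intro u i2 e he
    rw [Hz_expand]
    exact dvd_add_cancel _ _ _ (((pow_dvd_pow (p : ℤ) he).trans htz1).mul_right _)
  by_cases hbase : (p : ℤ) ^ j ∣ Gz mt lt aα v₀ r₀ ∧ ∀ i, (p : ℤ) ^ j ∣ Hz M aα aβ v₀ r₀ i
  · by_cases hb1 : (p : ℤ) ^ (j+1) ∣ Gz mt lt aα v₀ r₀
        ∧ ∀ i, (p : ℤ) ^ (j+1) ∣ Hz M aα aβ v₀ r₀ i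
    · have heq : ∀ k, Nat.card {u : Fin (p ^ (j+1)) × (Fin g → Fin (p ^ (j+1))) //
          fibCond M p mt lt nt aα aβ tz v₀ r₀ (p ^ (j+1)) k j u}
          = Nat.card {u : Fin (p ^ (j+1)) × (Fin g → Fin (p ^ (j+1))) //
          fibCond M p mt lt nt aα aβ tz v₀ r₀ (p ^ (j+1)) k (j+1) u} := by
        intro k
        apply Nat.card_congr
        apply Equiv.subtypeEquivRight
        intro u
        unfold fibCond
        constructor
        · rintro ⟨h1, -, -⟩
          exact ⟨h1, (hGinv u (j+1) le_rfl).mpr hb1.1,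
            fun i => (hHinv u i (j+1) le_rfl).mpr (hb1.2 i)⟩
        · rintro ⟨h1, -, -⟩
          exact ⟨h1, (hGinv u j (by omega)).mpr hbase.1,
            fun i => (hHinv u i j (by omega)).mpr (hbase.2 i)⟩
      rw [heq lam, heq (lam - 1)]
      ring
    · -- exact level j
      have hsimp : ∀ k, Nat.card {u : Fin (p ^ (j+1)) × (Fin g → Fin (p ^ (j+1))) //
          fibCond M p mt lt nt aα aβ tz v₀ r₀ (p ^ (j+1)) k j u}
          = Nat.card {u : Fin (p ^ (j+1)) × (Fin g → Fin (p ^ (j+1))) //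
            (p : ℤ) ^ k ∣ Fz M mt lt nt aα aβ (v₀ + tz * ((u.1 : ℕ) : ℤ))
              (fun i => r₀ i + tz * ((u.2 i : ℕ) : ℤ))} := by
        intro k
        apply Nat.card_congr
        apply Equiv.subtypeEquivRight
        intro u
        unfold fibCond
        constructor
        · exact fun h => h.1
        · intro h1
          exact ⟨h1, (hGinv u j (by omega)).mpr hbase.1,
            fun i => (hHinv u i j (by omega)).mpr (hbase.2 i)⟩
      have hempty : ∀ k, Nat.card {u : Fin (p ^ (j+1)) × (Fin g → Fin (p ^ (j+1))) //
          fibCond M p mt lt nt aα aβ tz v₀ r₀ (p ^ (j+1)) k (j+1) u} = 0 := by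
        intro k
        haveI : IsEmpty {u : Fin (p ^ (j+1)) × (Fin g → Fin (p ^ (j+1))) //
            fibCond M p mt lt nt aα aβ tz v₀ r₀ (p ^ (j+1)) k (j+1) u} := by
          refine ⟨fun u => hb1 ⟨(hGinv u.1 (j+1) le_rfl).mp u.2.2.1,
            fun i => (hHinv u.1 i (j+1) le_rfl).mp (u.2.2.2 i)⟩⟩
        exact Nat.card_of_isEmpty
      rw [hsimp lam, hsimp (lam - 1), hempty lam, hempty (lam - 1)]
      obtain ⟨gq, hgq⟩ := hbase.1
      choose hq hhq using hbase.2
      by_cases hF : (p : ℤ) ^ (lam - 1) ∣ Fz M mt lt nt aα aβ v₀ r₀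
      · obtain ⟨c, hc⟩ := hF
        have hFexp' : ∀ u : Fin (p ^ (j+1)) × (Fin g → Fin (p ^ (j+1))),
            Fz M mt lt nt aα aβ (v₀ + tz * ((u.1 : ℕ) : ℤ))
              (fun i => r₀ i + tz * ((u.2 i : ℕ) : ℤ))
            = Fz M mt lt nt aα aβ v₀ r₀
              + (tz * (((u.1 : ℕ) : ℤ) * Gz mt lt aα v₀ r₀
                  - ∑ i, ((u.2 i : ℕ) : ℤ) * Hz M aα aβ v₀ r₀ i)
                + tz ^ 2 * (mt * ((u.1 : ℕ) : ℤ) ^ 2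
                  - Av aα (fun i => ((u.2 i : ℕ) : ℤ)) * ((u.1 : ℕ) : ℤ)
                  - Bz M (fun i => ((u.2 i : ℕ) : ℤ)) (fun i => ((u.2 i : ℕ) : ℤ)) / 2)) := by
          intro u
          rw [Fz_expand M hs hd mt lt nt aα aβ v₀ ((u.1 : ℕ) : ℤ) tz r₀
            (fun i => ((u.2 i : ℕ) : ℤ))]
          ring
        have hall : ∀ u : Fin (p ^ (j+1)) × (Fin g → Fin (p ^ (j+1))),
            (p : ℤ) ^ (lam - 1) ∣ Fz M mt lt nt aα aβ (v₀ + tz * ((u.1 : ℕ) : ℤ))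
              (fun i => r₀ i + tz * ((u.2 i : ℕ) : ℤ)) := by
          intro u
          rw [hFexp' u]
          have hd1 : (p : ℤ) ^ (lam - 1) ∣ tz * (((u.1 : ℕ) : ℤ) * Gz mt lt aα v₀ r₀
              - ∑ i, ((u.2 i : ℕ) : ℤ) * Hz M aα aβ v₀ r₀ i) := by
            rw [← htz2]
            exact mul_dvd_mul_left tz (dvd_sub (hbase.1.mul_left _)
              (Finset.dvd_sum fun i _ => (hbase.2 i).mul_left _))
          have hd2 : (p : ℤ) ^ (lam - 1) ∣ tz ^ 2 * (mt * ((u.1 : ℕ) : ℤ) ^ 2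
              - Av aα (fun i => ((u.2 i : ℕ) : ℤ)) * ((u.1 : ℕ) : ℤ)
              - Bz M (fun i => ((u.2 i : ℕ) : ℤ)) (fun i => ((u.2 i : ℕ) : ℤ)) / 2) :=
            ((pow_dvd_pow (p : ℤ) (by omega : lam - 1 ≤ lam)).trans htz3).mul_right _
          exact (dvd_add_cancel _ _ _ (hd1.add hd2)).mpr ⟨c, hc⟩
        have hcard1 : Nat.card {u : Fin (p ^ (j+1)) × (Fin g → Fin (p ^ (j+1))) //
            (p : ℤ) ^ (lam - 1) ∣ Fz M mt lt nt aα aβ (v₀ + tz * ((u.1 : ℕ) : ℤ))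
              (fun i => r₀ i + tz * ((u.2 i : ℕ) : ℤ))} = (p ^ (j+1)) ^ (g+1) := by
          rw [Nat.card_congr (Equiv.subtypeUnivEquiv hall)]
          rw [Nat.card_prod, Nat.card_fun]
          simp only [Nat.card_eq_fintype_card, Fintype.card_fin]
          rw [pow_succ]
          ring
        have hFX : ∀ u : Fin (p ^ (j+1)) × (Fin g → Fin (p ^ (j+1))),
            Fz M mt lt nt aα aβ (v₀ + tz * ((u.1 : ℕ) : ℤ))
              (fun i => r₀ i + tz * ((u.2 i : ℕ) : ℤ))
            = (p : ℤ) ^ (lam - 1) * (c + ((u.1 : ℕ) : ℤ) * gq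
                - ∑ i, ((u.2 i : ℕ) : ℤ) * hq i)
              + tz ^ 2 * (mt * ((u.1 : ℕ) : ℤ) ^ 2
                  - Av aα (fun i => ((u.2 i : ℕ) : ℤ)) * ((u.1 : ℕ) : ℤ)
                  - Bz M (fun i => ((u.2 i : ℕ) : ℤ)) (fun i => ((u.2 i : ℕ) : ℤ)) / 2) := by
          intro u
          rw [hFexp' u, hc, hgq]
          simp_rw [hhq]
          have hpt : ∀ i : Fin g, ((u.2 i : ℕ) : ℤ) * ((p : ℤ) ^ j * hq i)
              = (p : ℤ) ^ j * (((u.2 i : ℕ) : ℤ) * hq i) := fun i => by ring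
          simp_rw [hpt]
          rw [← Finset.mul_sum, ← htz2]
          ring
        have hiff : ∀ u : Fin (p ^ (j+1)) × (Fin g → Fin (p ^ (j+1))),
            ((p : ℤ) ^ lam ∣ Fz M mt lt nt aα aβ (v₀ + tz * ((u.1 : ℕ) : ℤ))
              (fun i => r₀ i + tz * ((u.2 i : ℕ) : ℤ)))
            ↔ (((c + ((u.1 : ℕ) : ℤ) * gq - ∑ i, ((u.2 i : ℕ) : ℤ) * hq i : ℤ)) : ZMod p)
                = 0 := by
          intro u
          rw [hFX u]
          rw [dvd_add_cancel _ _ _ (htz3.mul_right _)]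
          have hsplit : (p : ℤ) ^ lam = (p : ℤ) ^ (lam - 1) * (p : ℤ) := by
            rw [← pow_succ]; congr 1; omega
          rw [hsplit, mul_dvd_mul_iff_left (pow_ne_zero _ hpz),
            ← ZMod.intCast_zmod_eq_zero_iff_dvd]
        rw [Nat.card_congr (Equiv.subtypeEquivRight hiff)]
        have htrans :
            Nat.card {u : Fin (p ^ (j+1)) × (Fin g → Fin (p ^ (j+1))) //
              (((c + ((u.1 : ℕ) : ℤ) * gq - ∑ i, ((u.2 i : ℕ) : ℤ) * hq i : ℤ)) : ZMod p) = 0}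
            = Nat.card {s : Option (Fin g) → Fin (p ^ (j+1)) //
              ((c : ℤ) : ZMod p) + ∑ o, (Option.elim o ((gq : ℤ) : ZMod p)
                  (fun i => -((hq i : ℤ) : ZMod p))) * ((s o : ℕ) : ZMod p) = 0} := by
          apply Nat.card_congr
          refine Equiv.subtypeEquiv
            (Equiv.piOptionEquivProd (β := fun _ : Option (Fin g) => Fin (p ^ (j+1)))).symm ?_
          intro u
          rw [Fintype.sum_option]
          simp only [Equiv.piOptionEquivProd_symm_apply, Option.elim]
          have hrw : ((c + ((u.1 : ℕ) : ℤ) * gq - ∑ i, ((u.2 i : ℕ) : ℤ) * hq i : ℤ) : ZMod p)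
              = ((c : ℤ) : ZMod p) + ((gq : ℤ) : ZMod p) * ((u.1 : ℕ) : ZMod p)
                + ∑ i, (-((hq i : ℤ) : ZMod p)) * ((u.2 i : ℕ) : ZMod p) := by
            push_cast
            simp only [neg_mul]
            rw [Finset.sum_neg_distrib]
            have hcomm : ∑ x, ((hq x : ℤ) : ZMod p) * ((u.2 x : ℕ) : ZMod p)
                = ∑ x, ((u.2 x : ℕ) : ZMod p) * ((hq x : ℤ) : ZMod p) :=
              Finset.sum_congr rfl fun i _ => mul_comm _ _
            rw [hcomm]
            ring
          rw [hrw, add_assoc]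
        rw [htrans]
        have hpiv : ∃ o : Option (Fin g),
            (Option.elim o ((gq : ℤ) : ZMod p) (fun i => -((hq i : ℤ) : ZMod p))) ≠ 0 := by
          by_cases hg : (p : ℤ) ∣ gq
          · have hG1 : (p : ℤ) ^ (j+1) ∣ Gz mt lt aα v₀ r₀ := by
              rw [hgq, pow_succ]
              exact mul_dvd_mul_left _ hg
            have : ∃ i, ¬ (p : ℤ) ∣ hq i := by
              by_contra hcon
              push_neg at hcon
              exact hb1 ⟨hG1, fun i => by
                rw [hhq i, pow_succ]
                exact mul_dvd_mul_left _ (hcon i)⟩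
            obtain ⟨i, hi⟩ := this
            refine ⟨some i, ?_⟩
            simp only [Option.elim]
            refine neg_ne_zero.mpr (fun h0 => hi ?_)
            exact_mod_cast (ZMod.intCast_zmod_eq_zero_iff_dvd _ _).mp h0
          · refine ⟨none, ?_⟩
            simp only [Option.elim]
            refine fun h0 => hg ?_
            exact_mod_cast (ZMod.intCast_zmod_eq_zero_iff_dvd _ _).mp h0
        obtain ⟨o, ho⟩ := hpiv
        have hca := count_affine p hp j
          (fun o => Option.elim o ((gq : ℤ) : ZMod p) (fun i => -((hq i : ℤ) : ZMod p)))
          ((c : ℤ) : ZMod p) o ho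
        rw [Fintype.card_option, Fintype.card_fin] at hca
        rw [hcard1]
        have hcaz := congrArg (Nat.cast : ℕ → ℤ) hca
        push_cast at hcaz ⊢
        linarith
      · -- both counts are 0
        have hFinv : ∀ u : Fin (p ^ (j+1)) × (Fin g → Fin (p ^ (j+1))),
            ¬ (p : ℤ) ^ (lam - 1) ∣ Fz M mt lt nt aα aβ (v₀ + tz * ((u.1 : ℕ) : ℤ))
              (fun i => r₀ i + tz * ((u.2 i : ℕ) : ℤ)) := by
          intro u hdvd
          apply hF
          have hFexp' : Fz M mt lt nt aα aβ (v₀ + tz * ((u.1 : ℕ) : ℤ))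
              (fun i => r₀ i + tz * ((u.2 i : ℕ) : ℤ))
              = Fz M mt lt nt aα aβ v₀ r₀
                + (tz * (((u.1 : ℕ) : ℤ) * Gz mt lt aα v₀ r₀
                    - ∑ i, ((u.2 i : ℕ) : ℤ) * Hz M aα aβ v₀ r₀ i)
                  + tz ^ 2 * (mt * ((u.1 : ℕ) : ℤ) ^ 2
                    - Av aα (fun i => ((u.2 i : ℕ) : ℤ)) * ((u.1 : ℕ) : ℤ)
                    - Bz M (fun i => ((u.2 i : ℕ) : ℤ)) (fun i => ((u.2 i : ℕ) : ℤ)) / 2)) := by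
            rw [Fz_expand M hs hd mt lt nt aα aβ v₀ ((u.1 : ℕ) : ℤ) tz r₀
              (fun i => ((u.2 i : ℕ) : ℤ))]
            ring
          rw [hFexp'] at hdvd
          have hd1 : (p : ℤ) ^ (lam - 1) ∣ tz * (((u.1 : ℕ) : ℤ) * Gz mt lt aα v₀ r₀
              - ∑ i, ((u.2 i : ℕ) : ℤ) * Hz M aα aβ v₀ r₀ i) := by
            rw [← htz2]
            exact mul_dvd_mul_left tz (dvd_sub (hbase.1.mul_left _)
              (Finset.dvd_sum fun i _ => (hbase.2 i).mul_left _))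
          have hd2 : (p : ℤ) ^ (lam - 1) ∣ tz ^ 2 * (mt * ((u.1 : ℕ) : ℤ) ^ 2
              - Av aα (fun i => ((u.2 i : ℕ) : ℤ)) * ((u.1 : ℕ) : ℤ)
              - Bz M (fun i => ((u.2 i : ℕ) : ℤ)) (fun i => ((u.2 i : ℕ) : ℤ)) / 2) :=
            ((pow_dvd_pow (p : ℤ) (by omega : lam - 1 ≤ lam)).trans htz3).mul_right _
          have := (dvd_add_cancel _ _ _ (hd1.add hd2)).mp hdvd
          exact this
        have hz1 : Nat.card {u : Fin (p ^ (j+1)) × (Fin g → Fin (p ^ (j+1))) //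
            (p : ℤ) ^ lam ∣ Fz M mt lt nt aα aβ (v₀ + tz * ((u.1 : ℕ) : ℤ))
              (fun i => r₀ i + tz * ((u.2 i : ℕ) : ℤ))} = 0 := by
          haveI : IsEmpty {u : Fin (p ^ (j+1)) × (Fin g → Fin (p ^ (j+1))) //
              (p : ℤ) ^ lam ∣ Fz M mt lt nt aα aβ (v₀ + tz * ((u.1 : ℕ) : ℤ))
                (fun i => r₀ i + tz * ((u.2 i : ℕ) : ℤ))} :=
            ⟨fun u => hFinv u.1 ((pow_dvd_pow (p : ℤ) (by omega : lam - 1 ≤ lam)).trans u.2)⟩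
          exact Nat.card_of_isEmpty
        have hz2 : Nat.card {u : Fin (p ^ (j+1)) × (Fin g → Fin (p ^ (j+1))) //
            (p : ℤ) ^ (lam - 1) ∣ Fz M mt lt nt aα aβ (v₀ + tz * ((u.1 : ℕ) : ℤ))
              (fun i => r₀ i + tz * ((u.2 i : ℕ) : ℤ))} = 0 := by
          haveI : IsEmpty {u : Fin (p ^ (j+1)) × (Fin g → Fin (p ^ (j+1))) //
              (p : ℤ) ^ (lam - 1) ∣ Fz M mt lt nt aα aβ (v₀ + tz * ((u.1 : ℕ) : ℤ))
                (fun i => r₀ i + tz * ((u.2 i : ℕ) : ℤ))} := ⟨fun u => hFinv u.1 u.2⟩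
          exact Nat.card_of_isEmpty
        rw [hz1, hz2]
        ring
  · -- base level-j conditions fail: everything empty
    have hzero : ∀ (k jj : ℕ), j ≤ jj →
        Nat.card {u : Fin (p ^ (j+1)) × (Fin g → Fin (p ^ (j+1))) //
          fibCond M p mt lt nt aα aβ tz v₀ r₀ (p ^ (j+1)) k jj u} = 0 := by
      intro k jj hjj
      haveI : IsEmpty {u : Fin (p ^ (j+1)) × (Fin g → Fin (p ^ (j+1))) //
          fibCond M p mt lt nt aα aβ tz v₀ r₀ (p ^ (j+1)) k jj u} := by
        refine ⟨fun u => hbase ⟨?_, ?_⟩⟩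
        · exact (hGinv u.1 j (by omega)).mp ((pow_dvd_pow (p : ℤ) hjj).trans u.2.2.1)
        · exact fun i => (hHinv u.1 i j (by omega)).mp
            ((pow_dvd_pow (p : ℤ) hjj).trans (u.2.2.2 i))
      exact Nat.card_of_isEmpty
    rw [hzero lam j le_rfl, hzero lam (j+1) (by omega), hzero (lam - 1) j le_rfl,
      hzero (lam - 1) (j+1) (by omega)]
    ring


def prodSplit {g K t N : ℕ} (e : Fin K × Fin t ≃ Fin N) :
    ((Fin t × (Fin g → Fin t)) × (Fin K × (Fin g → Fin K))) ≃ (Fin N × (Fin g → Fin N)) where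
  toFun x := (e (x.2.1, x.1.1), fun i => e (x.2.2 i, x.1.2 i))
  invFun y := (((e.symm y.1).2, fun i => (e.symm (y.2 i)).2),
               ((e.symm y.1).1, fun i => (e.symm (y.2 i)).1))
  left_inv := by rintro ⟨⟨a, ar⟩, ⟨u, ur⟩⟩; simp
  right_inv := by rintro ⟨v, rv⟩; simp

lemma card_congr_comp {A B : Type} (e : A ≃ B) (Q : B → Prop) :
    Nat.card {y : B // Q y} = Nat.card {x : A // Q (e x)} :=
  Nat.card_congr (Equiv.subtypeEquiv e.symm
    (fun b => iff_of_eq (congrArg Q (e.apply_symm_apply b).symm)))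

end GKZaux
end

/-- `p·M_j^*(p^λ) = M_j^*(p^{λ−1})` for `j < ⌊λ/2⌋`,
where `M_j^*(p^k) = M_j(p^k) − M_{j+1}(p^k)`. -/
theorem Mcount_star_eq
    {g : ℕ} (hg : 0 < g) (M : Matrix (Fin g) (Fin g) ℤ)
    (hsymm : M.IsSymm) (hdiag : ∀ i, Even (M i i)) (hdet : M.det ≠ 0)
    (p : ℕ) (hp : p.Prime) (lam : ℕ) (hlam : 1 ≤ lam) (j : ℕ) (hj : j < lam / 2)
    (α β : Fin g → ℚ) (hα : IsDual M α) (hβ : IsDual M β)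
    (ℓ m n : ℤ)
    (hm : ∃ z : ℤ, (m : ℚ) / (2 * M.det) - qf M α = (z : ℚ))
    (hℓ : ∃ z : ℤ, (ℓ : ℚ) / (M.det : ℚ) - bform M α β = (z : ℚ))
    (hn : ∃ z : ℤ, (n : ℚ) / (2 * M.det) - qf M β = (z : ℚ)) :
    (p : ℤ) * ((Mcount M α β ℓ m n p lam j lam : ℤ)
        - (Mcount M α β ℓ m n p lam (j + 1) lam : ℤ))
      = (Mcount M α β ℓ m n p lam j (lam - 1) : ℤ)
        - (Mcount M α β ℓ m n p lam (j + 1) (lam - 1) : ℤ) := by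
  classical
  obtain ⟨mt, hmt⟩ := hm
  obtain ⟨lt, hlt⟩ := hℓ
  obtain ⟨nt, hnt⟩ := hn
  obtain ⟨aα, haα⟩ := GKZaux.exists_coeff M α hα
  obtain ⟨aβ, haβ⟩ := GKZaux.exists_coeff M β hβ
  have h2j : 2 * j + 2 ≤ lam := by omega
  haveI : Fact p.Prime := ⟨hp⟩
  have hKt : p ^ (j + 1) * p ^ (lam - 1 - j) = p ^ lam := by
    rw [← pow_add]; congr 1; omega
  set e1 : Fin (p ^ (j + 1)) × Fin (p ^ (lam - 1 - j)) ≃ Fin (p ^ lam) :=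
    finProdFinEquiv.trans (finCongr hKt) with he1
  have hval : ∀ (u : Fin (p ^ (j + 1))) (a : Fin (p ^ (lam - 1 - j))),
      ((e1 (u, a) : Fin (p ^ lam)) : ℕ) = (a : ℕ) + p ^ (lam - 1 - j) * (u : ℕ) := by
    intro u a
    rw [he1]
    show ((finCongr hKt) (finProdFinEquiv (u, a)) : ℕ) = _
    rw [finCongr_apply, Fin.coe_cast, finProdFinEquiv_apply_val]
  have htz1 : (p : ℤ) ^ (j + 1) ∣ (p : ℤ) ^ (lam - 1 - j) :=
    pow_dvd_pow _ (by omega)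
  have htz2 : (p : ℤ) ^ (lam - 1 - j) * (p : ℤ) ^ j = (p : ℤ) ^ (lam - 1) := by
    rw [← pow_add]; congr 1; omega
  have htz3 : (p : ℤ) ^ lam ∣ ((p : ℤ) ^ (lam - 1 - j)) ^ 2 := by
    rw [← pow_mul]
    exact pow_dvd_pow _ (by omega)
  have hM : ∀ (k jj : ℕ),
      Mcount M α β ℓ m n p lam jj k
        = ∑ a : Fin (p ^ (lam - 1 - j)) × (Fin g → Fin (p ^ (lam - 1 - j))),
            Nat.card {u : Fin (p ^ (j + 1)) × (Fin g → Fin (p ^ (j + 1))) //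
              GKZaux.fibCond M p mt lt nt aα aβ ((p : ℤ) ^ (lam - 1 - j))
                ((a.1 : ℕ) : ℤ) (fun i => ((a.2 i : ℕ) : ℤ)) (p ^ (j + 1)) k jj u} := by
    intro k jj
    unfold Mcount
    have step1 : ∀ vr : Fin (p ^ lam) × (Fin g → Fin (p ^ lam)),
        ((∃ z : ℤ, fval M α β ℓ m ((vr.1 : ℕ) : ℤ) (fun i => ((vr.2 i : ℕ) : ℤ))
            + ((n : ℚ) / (2 * M.det) - qf M β) = (z : ℚ) * (p : ℚ) ^ k) ∧
          (∃ z : ℤ, 2 * ((m : ℚ) / (2 * M.det) - qf M α) * ((vr.1 : ℕ) : ℚ)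
              - bform M α (fun i => ((vr.2 i : ℕ) : ℚ))
              - ((ℓ : ℚ) / (M.det : ℚ) - bform M α β) = (z : ℚ) * (p : ℚ) ^ jj) ∧
          (∀ y : Fin g → ℤ, ∃ z : ℤ,
              bform M (fun i => α i * ((vr.1 : ℕ) : ℚ) + ((vr.2 i : ℕ) : ℚ) - β i)
                (fun i => (y i : ℚ)) = (z : ℚ) * (p : ℚ) ^ jj))
        ↔ ((p : ℤ) ^ k ∣ GKZaux.Fz M mt lt nt aα aβ ((vr.1 : ℕ) : ℤ)
              (fun i => ((vr.2 i : ℕ) : ℤ))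
            ∧ (p : ℤ) ^ jj ∣ GKZaux.Gz mt lt aα ((vr.1 : ℕ) : ℤ)
              (fun i => ((vr.2 i : ℕ) : ℤ))
            ∧ ∀ i2, (p : ℤ) ^ jj ∣ GKZaux.Hz M aα aβ ((vr.1 : ℕ) : ℤ)
              (fun i => ((vr.2 i : ℕ) : ℤ)) i2) := by
      intro vr
      refine and_congr ?_ (and_congr ?_ ?_)
      · rw [← GKZaux.cast_Fz M hsymm hdiag α β ℓ m n mt lt nt aα aβ hmt hlt hnt haα haβ
          ((vr.1 : ℕ) : ℤ) (fun i => ((vr.2 i : ℕ) : ℤ))]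
        exact GKZaux.exists_cast_iff_dvd p _ k
      · have hG := GKZaux.cast_Gz M α β ℓ m mt lt aα hmt hlt haα
          ((vr.1 : ℕ) : ℤ) (fun i => ((vr.2 i : ℕ) : ℤ))
        simp only [Int.cast_natCast] at hG
        rw [← hG]
        exact GKZaux.exists_cast_iff_dvd p _ jj
      · have hH := fun y => GKZaux.cast_H M α β mt lt aα aβ haα haβ
          ((vr.1 : ℕ) : ℤ) (fun i => ((vr.2 i : ℕ) : ℤ)) y
        simp only [Int.cast_natCast] at hH
        constructor
        · intro h3 i2
          obtain ⟨z, hz⟩ := h3 (Pi.single i2 1)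
          rw [hH (Pi.single i2 1)] at hz
          have hcol : (∑ i, ((Pi.single i2 1 : Fin g → ℤ) i : ℚ)
              * ((GKZaux.Hz M aα aβ ((vr.1 : ℕ) : ℤ)
                  (fun i => ((vr.2 i : ℕ) : ℤ)) i : ℤ) : ℚ))
              = ((GKZaux.Hz M aα aβ ((vr.1 : ℕ) : ℤ)
                  (fun i => ((vr.2 i : ℕ) : ℤ)) i2 : ℤ) : ℚ) := by
            rw [Finset.sum_eq_single i2]
            · simp
            · intro b _ hb; simp [Pi.single_apply, hb]
            · simp
          rw [hcol] at hz
          exact (GKZaux.exists_cast_iff_dvd p _ jj).mp ⟨z, hz⟩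
        · intro h3 y
          choose cz hcz using h3
          refine ⟨∑ i, y i * cz i, ?_⟩
          rw [hH y]
          have hpt : ∀ i, ((GKZaux.Hz M aα aβ ((vr.1 : ℕ) : ℤ)
              (fun i => ((vr.2 i : ℕ) : ℤ)) i : ℤ) : ℚ) = (p : ℚ) ^ jj * (cz i : ℚ) := by
            intro i
            rw [hcz i]
            push_cast
            ring
          simp_rw [hpt]
          push_cast
          rw [Finset.sum_mul]
          exact Finset.sum_congr rfl fun i _ => by ring
    rw [Nat.card_congr (Equiv.subtypeEquivRight step1)]
    rw [GKZaux.card_congr_comp (GKZaux.prodSplit e1) _]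
    rw [GKZaux.card_prod_subtype]
    refine Finset.sum_congr rfl fun a _ => ?_
    apply Nat.card_congr
    apply Equiv.subtypeEquivRight
    intro u
    unfold GKZaux.fibCond
    simp only [GKZaux.prodSplit, Equiv.coe_fn_mk, hval]
    push_cast
    exact Iff.rfl
  rw [hM lam j, hM lam (j + 1), hM (lam - 1) j, hM (lam - 1) (j + 1)]
  push_cast
  rw [← Finset.sum_sub_distrib, ← Finset.sum_sub_distrib, Finset.mul_sum]
  refine Finset.sum_congr rfl fun a _ => ?_
  exact GKZaux.fiber_core M hsymm hdiag p hp lam j h2j mt lt nt aα aβ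
    ((p : ℤ) ^ (lam - 1 - j)) ((a.1 : ℕ) : ℤ) (fun i => ((a.2 i : ℕ) : ℤ))
    htz1 htz2 htz3
end

section
/- Let α, β ∈ L' and let ℓ, m, n be integers with m ≠ 0 such that m̃ := m/(2Δ) − q(α), ℓ̃ := ℓ/Δ − ⟨α,β⟩, and ñ := n/(2Δ) − q(β) are all integers. Let p be a prime, and define ν and μ by p^ν ∥ 2Δ and p^μ ∥ m. Then for all integers 0 ≤ j ≤ k ≤ λ: if j ≥ ν + μ then M_j(p^k) ≤ p^((g+1)(λ−j+μ)+gν), and if j ≤ ν + μ − 1 then M_j(p^k) ≤ p^((g+1)λ−j+μ). -/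
open scoped BigOperators Classical

section AuxLemmas

lemma lemP {p : ℕ} (hp : p.Prime) {ν j : ℕ} {e d : ℤ}
    (he1 : (p:ℤ)^ν ∣ e) (he2 : ¬ (p:ℤ)^(ν+1) ∣ e) (h : (p:ℤ)^j ∣ e * d) :
    (p:ℤ)^(j - ν) ∣ d := by
  obtain ⟨e', rfl⟩ := he1
  have hpz : Prime (p:ℤ) := Nat.prime_iff_prime_int.mp hp
  have hpe' : ¬ (p:ℤ) ∣ e' := by
    rintro ⟨c, rfl⟩
    exact he2 ⟨c, by ring⟩
  rcases le_or_gt j ν with hle | hlt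
  · simp [Nat.sub_eq_zero_of_le hle]
  · have hpow : ((p:ℤ))^j = (p:ℤ)^ν * (p:ℤ)^(j-ν) := by
      rw [← pow_add]; congr 1; omega
    have h2 : (p:ℤ)^(j-ν) ∣ e' * d := by
      obtain ⟨c, hc⟩ := h
      refine ⟨c, mul_left_cancel₀ (pow_ne_zero ν hpz.ne_zero) ?_⟩
      calc (p:ℤ)^ν * (e' * d) = (p:ℤ)^ν * e' * d := by ring
        _ = (p:ℤ)^j * c := hc
        _ = (p:ℤ)^ν * ((p:ℤ)^(j-ν) * c) := by rw [hpow]; ring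
    exact ((hpz.coprime_iff_not_dvd.mpr hpe').pow_left).dvd_of_dvd_mul_left h2

lemma bform_L1 {g : ℕ} (M : Matrix (Fin g) (Fin g) ℤ) (u : Fin g → ℚ) (T : ℚ)
    (h : ∀ y : Fin g → ℤ, ∃ z : ℤ, bform M u (fun i => (y i : ℚ)) = (z : ℚ) * T) (i : Fin g) :
    ∃ z : ℤ, (M.det : ℚ) * u i = (z : ℚ) * T := by
  obtain ⟨z, hz⟩ := h (fun l => M.adjugate l i)
  refine ⟨z, ?_⟩
  rw [← hz]
  unfold bform
  have key : ∀ k, (Matrix.mulVec (M.map (Int.cast : ℤ → ℚ)) (fun l => ((M.adjugate l i : ℤ) : ℚ))) k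
      = (M.det : ℚ) * (if k = i then 1 else 0) := by
    intro k
    have h0 : (M * M.adjugate) k i = M.det * (if k = i then 1 else 0) := by
      rw [Matrix.mul_adjugate]
      simp [Matrix.smul_apply, Matrix.one_apply]
    rw [Matrix.mul_apply] at h0
    have h1 := congrArg (Int.cast : ℤ → ℚ) h0
    push_cast [apply_ite (Int.cast : ℤ → ℚ)] at h1
    simpa [Matrix.mulVec, dotProduct, Matrix.map_apply, ← Int.cast_det] using h1
  rw [show (Matrix.mulVec (M.map (Int.cast : ℤ → ℚ)) (fun l => ((M.adjugate l i : ℤ) : ℚ)))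
      = (fun k => (M.det : ℚ) * (if k = i then 1 else 0)) from funext key]
  simp [dotProduct, mul_ite, mul_comm]

lemma bform_smul_right {g : ℕ} (M : Matrix (Fin g) (Fin g) ℤ) (x : Fin g → ℚ) (c : ℚ) (y : Fin g → ℚ) :
    bform M x (fun i => (y i) * c) = bform M x y * c := by
  have h : (fun i => y i * c) = c • y := by funext i; simp [mul_comm]
  rw [h]; unfold bform
  rw [Matrix.mulVec_smul, dotProduct_smul, smul_eq_mul]; ring

lemma bform_add_right {g : ℕ} (M : Matrix (Fin g) (Fin g) ℤ) (x y z : Fin g → ℚ) :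
    bform M x (y + z) = bform M x y + bform M x z := by
  unfold bform; rw [Matrix.mulVec_add, dotProduct_add]

lemma bform_sub_right {g : ℕ} (M : Matrix (Fin g) (Fin g) ℤ) (x y z : Fin g → ℚ) :
    bform M x (y - z) = bform M x y - bform M x z := by
  unfold bform; rw [Matrix.mulVec_sub, dotProduct_sub]

lemma bform_sub_left {g : ℕ} (M : Matrix (Fin g) (Fin g) ℤ) (x y z : Fin g → ℚ) :
    bform M (x - y) z = bform M x z - bform M y z := by
  unfold bform; rw [sub_dotProduct]

lemma fin_div_mod_eq {p lam e : ℕ} (v v' : Fin (p^lam))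
    (hd : (p:ℤ)^e ∣ ((v:ℕ):ℤ) - ((v':ℕ):ℤ)) (hq : (v:ℕ)/p^e = (v':ℕ)/p^e) : v = v' := by
  have h1 : ((v':ℕ):ℤ) % ((p:ℤ)^e) = ((v:ℕ):ℤ) % ((p:ℤ)^e) := Int.modEq_iff_dvd.mpr hd
  have h2 : (v:ℕ) % p^e = (v':ℕ) % p^e := by exact_mod_cast h1.symm
  apply Fin.ext
  have d1 := Nat.div_add_mod (v:ℕ) (p^e)
  have d2 := Nat.div_add_mod (v':ℕ) (p^e)
  rw [hq, h2] at d1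
  omega

lemma fin_div_lt {p lam e : ℕ} (he : e ≤ lam) (v : Fin (p^lam)) :
    (v:ℕ)/p^e < p^(lam-e) := by
  apply Nat.div_lt_of_lt_mul
  have h : p^lam = p^e * p^(lam-e) := by rw [← pow_add]; congr 1; omega
  rw [← h]
  exact v.isLt

end AuxLemmas

/-- the upper bounds for `M_j(p^k)` (Lemma 16 of the paper). -/
theorem Mcount_upper_bound
    {g : ℕ} (hg : 0 < g) (M : Matrix (Fin g) (Fin g) ℤ)
    (hsymm : M.IsSymm) (hdiag : ∀ i, Even (M i i)) (hdet : M.det ≠ 0)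
    (α β : Fin g → ℚ) (hα : IsDual M α) (hβ : IsDual M β)
    (ℓ m n : ℤ) (hm0 : m ≠ 0)
    (hm : ∃ z : ℤ, (m : ℚ) / (2 * M.det) - qf M α = (z : ℚ))
    (hℓ : ∃ z : ℤ, (ℓ : ℚ) / (M.det : ℚ) - bform M α β = (z : ℚ))
    (hn : ∃ z : ℤ, (n : ℚ) / (2 * M.det) - qf M β = (z : ℚ))
    (p : ℕ) (hp : p.Prime) (lam : ℕ) (hlam : 1 ≤ lam)
    (nu mu : ℕ)
    (hnu : (p : ℤ) ^ nu ∣ 2 * M.det ∧ ¬ ((p : ℤ) ^ (nu + 1) ∣ 2 * M.det))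
    (hmu : (p : ℤ) ^ mu ∣ m ∧ ¬ ((p : ℤ) ^ (mu + 1) ∣ m))
    (j k : ℕ) (hjk : j ≤ k) (hk : k ≤ lam) :
    (nu + mu ≤ j →
        Mcount M α β ℓ m n p lam j k ≤ p ^ ((g + 1) * (lam - j + mu) + g * nu)) ∧
      (j < nu + mu →
        Mcount M α β ℓ m n p lam j k ≤ p ^ ((g + 1) * lam + mu - j)) := by
  classical
  obtain ⟨mt, hmt⟩ := hm
  obtain ⟨lt, hlt⟩ := hℓ
  have hdetQ : (M.det : ℚ) ≠ 0 := Int.cast_ne_zero.mpr hdet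
  have hq2 : 2 * qf M α = bform M α α := by unfold qf; ring
  have hm' : (m : ℚ) = 2 * (M.det:ℚ) * ((mt:ℚ) + qf M α) := by rw [← hmt]; field_simp; ring
  have hl' : (ℓ : ℚ) = (M.det:ℚ) * ((lt:ℚ) + bform M α β) := by rw [← hlt]; field_simp; ring
  -- Claim V : each solution satisfies p^j ∣ m v - ℓ
  have claimV : ∀ (v : Fin (p^lam)) (r : Fin g → Fin (p^lam)),
      (∃ z : ℤ, 2 * ((m : ℚ) / (2 * M.det) - qf M α) * ((v : ℕ) : ℚ)
        - bform M α (fun i => ((r i : ℕ) : ℚ))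
        - ((ℓ : ℚ) / (M.det : ℚ) - bform M α β) = (z : ℚ) * (p : ℚ) ^ j) →
      (∀ y : Fin g → ℤ, ∃ z : ℤ,
        bform M (fun i => α i * ((v : ℕ) : ℚ) + ((r i : ℕ) : ℚ) - β i)
          (fun i => (y i : ℚ)) = (z : ℚ) * (p : ℚ) ^ j) →
      (p:ℤ)^j ∣ m * ((v:ℕ):ℤ) - ℓ := by
    intro v r h2 h3
    set V : ℚ := ((v : ℕ) : ℚ) with hV
    set R : Fin g → ℚ := fun i => ((r i : ℕ) : ℚ) with hR
    set w : Fin g → ℚ := fun i => α i * V + R i - β i with hw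
    choose zv hzv using fun i => bform_L1 M w ((p:ℚ)^j) h3 i
    have hwz : w = fun i => (zv i : ℚ) * ((p:ℚ)^j / M.det) := by
      funext i
      have := hzv i
      field_simp
      linarith [hzv i]
    obtain ⟨z0, hz0⟩ := hα zv
    have hαw : bform M α w = (z0:ℚ) * ((p:ℚ)^j / M.det) := by
      rw [hwz]
      rw [show (fun i => (zv i : ℚ) * ((p:ℚ)^j / M.det))
          = (fun i => (fun i' => ((zv i' : ℤ):ℚ)) i * ((p:ℚ)^j / M.det)) from rfl]
      rw [bform_smul_right, hz0]
    have eq2' : (M.det:ℚ) * bform M α w = (z0:ℚ) * (p:ℚ)^j := by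
      rw [hαw]; field_simp
    have hexp : bform M α w = bform M α α * V + bform M α R - bform M α β := by
      have hsplit : w = ((fun i => α i * V) + R) - β := by
        funext i; simp [hw, Pi.add_apply, Pi.sub_apply]
      rw [hsplit, bform_sub_right, bform_add_right, bform_smul_right]
    obtain ⟨z2, hz2⟩ := h2
    rw [hmt, hlt] at hz2
    refine ⟨M.det * z2 + z0, ?_⟩
    have key : ((m * ((v:ℕ):ℤ) - ℓ : ℤ) : ℚ) = ((M.det * z2 + z0 : ℤ):ℚ) * (p:ℚ)^j := by
      push_cast
      simp only [← Int.cast_det]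
      rw [hexp] at eq2'
      linear_combination V * hm' - hl' + (M.det:ℚ) * hz2 + eq2' + ((M.det:ℚ) * V) * hq2
    have key2 : m * ((v:ℕ):ℤ) - ℓ = (M.det * z2 + z0) * (p:ℤ)^j := by exact_mod_cast key
    exact key2.trans (mul_comm _ _)
  -- Claim R : two solutions with the same v agree coordinatewise mod p^(j-nu)
  have claimR : ∀ (v : Fin (p^lam)) (r r' : Fin g → Fin (p^lam)),
      (∀ y : Fin g → ℤ, ∃ z : ℤ,
        bform M (fun i => α i * ((v : ℕ) : ℚ) + ((r i : ℕ) : ℚ) - β i)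
          (fun i => (y i : ℚ)) = (z : ℚ) * (p : ℚ) ^ j) →
      (∀ y : Fin g → ℤ, ∃ z : ℤ,
        bform M (fun i => α i * ((v : ℕ) : ℚ) + ((r' i : ℕ) : ℚ) - β i)
          (fun i => (y i : ℚ)) = (z : ℚ) * (p : ℚ) ^ j) →
      ∀ i, (p:ℤ)^(j-nu) ∣ ((r i : ℕ):ℤ) - ((r' i : ℕ):ℤ) := by
    intro v r r' h3 h3' i
    have hdiff : ∀ y : Fin g → ℤ, ∃ z : ℤ,
        bform M (fun i' => ((r i' : ℕ):ℚ) - ((r' i' : ℕ):ℚ)) (fun i' => (y i' : ℚ))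
          = (z : ℚ) * (p:ℚ)^j := by
      intro y
      obtain ⟨z1, hz1⟩ := h3 y
      obtain ⟨z2, hz2⟩ := h3' y
      refine ⟨z1 - z2, ?_⟩
      have hsplit : (fun i' => ((r i' : ℕ):ℚ) - ((r' i' : ℕ):ℚ))
          = (fun i' => α i' * ((v : ℕ) : ℚ) + ((r i' : ℕ) : ℚ) - β i')
            - (fun i' => α i' * ((v : ℕ) : ℚ) + ((r' i' : ℕ) : ℚ) - β i') := by
        funext i'; simp only [Pi.sub_apply]; ring
      rw [hsplit, bform_sub_left, hz1, hz2]
      push_cast; ring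
    obtain ⟨z, hz⟩ := bform_L1 M _ ((p:ℚ)^j) hdiff i
    have hzint : M.det * (((r i : ℕ):ℤ) - ((r' i : ℕ):ℤ)) = z * (p:ℤ)^j := by
      exact_mod_cast hz
    have hdvd : (p:ℤ)^j ∣ (2 * M.det) * (((r i : ℕ):ℤ) - ((r' i : ℕ):ℤ)) :=
      ⟨2 * z, by linarith [hzint]⟩
    exact lemP hp hnu.1 hnu.2 hdvd
  -- the common bound
  have hb1 : j - mu ≤ lam := by omega
  have hb2 : j - nu ≤ lam := by omega
  have main : Mcount M α β ℓ m n p lam j k ≤ p ^ ((lam - (j - mu)) + (lam - (j - nu)) * g) := by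
    unfold Mcount
    have := Nat.card_le_card_of_injective
      (α := {vr : Fin (p ^ lam) × (Fin g → Fin (p ^ lam)) //
        (∃ z : ℤ, fval M α β ℓ m ((vr.1 : ℕ) : ℤ) (fun i => ((vr.2 i : ℕ) : ℤ))
            + ((n : ℚ) / (2 * M.det) - qf M β) = (z : ℚ) * (p : ℚ) ^ k) ∧
        (∃ z : ℤ, 2 * ((m : ℚ) / (2 * M.det) - qf M α) * ((vr.1 : ℕ) : ℚ)
            - bform M α (fun i => ((vr.2 i : ℕ) : ℚ))
            - ((ℓ : ℚ) / (M.det : ℚ) - bform M α β) = (z : ℚ) * (p : ℚ) ^ j) ∧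
        (∀ y : Fin g → ℤ, ∃ z : ℤ,
            bform M (fun i => α i * ((vr.1 : ℕ) : ℚ) + ((vr.2 i : ℕ) : ℚ) - β i)
              (fun i => (y i : ℚ)) = (z : ℚ) * (p : ℚ) ^ j)})
      (β := Fin (p^(lam - (j - mu))) × (Fin g → Fin (p^(lam - (j - nu)))))
      (fun x => (⟨(x.1.1 : ℕ) / p^(j-mu), fin_div_lt hb1 x.1.1⟩,
        fun i => ⟨(x.1.2 i : ℕ) / p^(j-nu), fin_div_lt hb2 (x.1.2 i)⟩))
      ?_
    · refine le_trans this (le_of_eq ?_)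
      simp [Nat.card_eq_fintype_card, ← pow_mul, ← pow_add]
    · rintro ⟨⟨v, r⟩, h1, h2, h3⟩ ⟨⟨v', r'⟩, h1', h2', h3'⟩ hxy
      simp only [Prod.mk.injEq, Fin.mk.injEq] at hxy
      obtain ⟨hv, hr⟩ := hxy
      have hvdvd : (p:ℤ)^(j-mu) ∣ ((v:ℕ):ℤ) - ((v':ℕ):ℤ) := by
        have d1 := claimV v r h2 h3
        have d2 := claimV v' r' h2' h3'
        have : (p:ℤ)^j ∣ m * (((v:ℕ):ℤ) - ((v':ℕ):ℤ)) := by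
          have := dvd_sub d1 d2
          have e : m * ((v:ℕ):ℤ) - ℓ - (m * ((v':ℕ):ℤ) - ℓ) = m * (((v:ℕ):ℤ) - ((v':ℕ):ℤ)) := by ring
          rwa [e] at this
        exact lemP hp hmu.1 hmu.2 this
      have hveq : v = v' := fin_div_mod_eq v v' hvdvd hv
      subst hveq
      have hreq : r = r' := by
        funext i
        have hd := claimR v r r' h3 h3' i
        have hq' := congrFun hr i
        simp only [Fin.mk.injEq] at hq'
        exact fin_div_mod_eq (r i) (r' i) hd hq'
      subst hreq
      rfl
  have hp1 : 1 ≤ p := hp.one_lt.le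
  constructor
  · intro hcase
    refine le_trans main (Nat.pow_le_pow_right hp1 ?_)
    have e1 : lam - (j - nu) ≤ lam - j + mu + nu := by omega
    have e2 : lam - (j - mu) ≤ lam - j + mu := by omega
    calc (lam - (j - mu)) + (lam - (j - nu)) * g
        ≤ (lam - j + mu) + (lam - j + mu + nu) * g := by
          exact Nat.add_le_add e2 (Nat.mul_le_mul_right g e1)
      _ = (g + 1) * (lam - j + mu) + g * nu := by ring
  · intro hcase
    refine le_trans main (Nat.pow_le_pow_right hp1 ?_)
    have e1 : lam - (j - nu) ≤ lam := by omega
    have e2 : lam - (j - mu) ≤ lam + mu - j := by omega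
    have e3 : (g + 1) * lam = lam * g + lam := by ring
    calc (lam - (j - mu)) + (lam - (j - nu)) * g
        ≤ (lam + mu - j) + lam * g := Nat.add_le_add e2 (Nat.mul_le_mul_right g e1)
      _ ≤ (g + 1) * lam + mu - j := by omega
end

section
/- For every integer y and every integer c ≥ 1, the number R(y,c) of residue classes x modulo c with x² ≡ y (mod c) satisfies R(y,c) ≤ 2^(ω(c)+1)·gcd(y,c)^(1/2), where ω(c) denotes the number of distinct prime divisors of c and gcd(0,c) = c. -/
open scoped BigOperators Classical

noncomputable def ScardN (y : ℤ) (c : ℕ) : ℕ :=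
  ((Finset.range c).filter (fun x : ℕ => (c : ℤ) ∣ ((x:ℤ) ^ 2 - y))).card

lemma count_cong (N M : ℕ) (hM : 0 < M) (hMN : M ∣ N) (z : ℤ) :
    ((Finset.range N).filter (fun b : ℕ => (M:ℤ) ∣ (b:ℤ) - z)).card ≤ N / M := by
  have h : ((Finset.range N).filter (fun b : ℕ => (M:ℤ) ∣ (b:ℤ) - z)).card
      ≤ (Finset.range (N / M)).card := by
    apply Finset.card_le_card_of_injOn (fun b => b / M)
    · intro b hb
      simp only [Finset.mem_coe, Finset.mem_filter, Finset.mem_range] at hb ⊢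
      exact Nat.div_lt_div_of_lt_of_dvd hMN hb.1
    · intro b1 h1 b2 h2 hq
      simp only [Finset.mem_coe, Finset.mem_filter, Finset.mem_range] at h1 h2
      have hd : (M:ℤ) ∣ (b2:ℤ) - (b1:ℤ) := by
        have := dvd_sub h2.2 h1.2
        simpa using this
      have hmod : b1 % M = b2 % M := Nat.modEq_iff_dvd.2 hd
      have hq' : b1 / M = b2 / M := hq
      calc b1 = M * (b1 / M) + b1 % M := (Nat.div_add_mod _ _).symm
        _ = M * (b2 / M) + b2 % M := by rw [hq', hmod]
        _ = b2 := Nat.div_add_mod _ _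
  simpa using h

lemma ScardN_prime_pow {p k : ℕ} (hp : p.Prime) (hk : 0 < k) (y : ℤ)
    {v : ℕ} (hv : Int.gcd y (((p ^ k : ℕ)) : ℤ) = p ^ v) (hvk : v ≤ k) :
    ScardN y (p ^ k) ≤ 2 * (if p = 2 then 2 else 1) * p ^ (v / 2) := by
  have hppos : 0 < p := hp.pos
  have hp1 : 1 < p := hp.one_lt
  set S := (Finset.range (p^k)).filter (fun x : ℕ => ((p^k : ℕ) : ℤ) ∣ ((x:ℤ) ^ 2 - y)) with hS
  have hSeq : ScardN y (p ^ k) = S.card := rfl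
  rcases S.eq_empty_or_nonempty with hE | ⟨a, haS⟩
  · rw [hSeq, hE]; simp
  have ha := Finset.mem_filter.1 haS
  have haP : a < p ^ k := Finset.mem_range.1 ha.1
  have hady : ((p^k : ℕ) : ℤ) ∣ (a:ℤ)^2 - y := ha.2
  have hyv : ((p ^ v : ℕ) : ℤ) ∣ y := by
    have h := Int.gcd_dvd_left (a := y) (b := ((p^k : ℕ) : ℤ))
    rwa [hv] at h
  -- epsilon ≥ 1
  have heps : 1 ≤ (if p = 2 then 2 else 1 : ℕ) := by split <;> norm_num
  rcases eq_or_lt_of_le hvk with hveq | hvlt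
  · -- v = k : p^k ∣ y
    have hsub : S ⊆ (Finset.range (p^k)).filter
        (fun b : ℕ => ((p^((k+1)/2) : ℕ) : ℤ) ∣ (b:ℤ) - 0) := by
      intro b hb
      have hb' := Finset.mem_filter.1 hb
      simp only [Finset.mem_filter, Finset.mem_range, sub_zero]
      refine ⟨Finset.mem_range.1 hb'.1, ?_⟩
      have hb2 : ((p^v : ℕ) : ℤ) ∣ (b:ℤ)^2 := by
        have h1 : ((p^v : ℕ) : ℤ) ∣ (b:ℤ)^2 - y := by rw [hveq]; exact hb'.2
        have := dvd_add h1 hyv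
        simpa using this
      rcases Nat.eq_zero_or_pos b with rfl | hbpos
      · simp
      have hb2n : (p^v : ℕ) ∣ b^2 := by exact_mod_cast hb2
      have hble : v ≤ (b^2).factorization p :=
        (Nat.Prime.pow_dvd_iff_le_factorization hp (by positivity)).1 hb2n
      rw [Nat.factorization_pow, Finsupp.smul_apply, smul_eq_mul] at hble
      have h4 : (k+1)/2 ≤ b.factorization p := by omega
      have := (Nat.Prime.pow_dvd_iff_le_factorization hp (by omega)).2 h4
      exact_mod_cast this
    have hcard : S.card ≤ p ^ k / p ^ ((k+1)/2) := by
      calc S.card ≤ _ := Finset.card_le_card hsub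
        _ ≤ p ^ k / p ^ ((k+1)/2) := count_cong _ _ (by positivity) (pow_dvd_pow p (by omega)) 0
    rw [hSeq]
    calc S.card ≤ p ^ k / p ^ ((k+1)/2) := hcard
      _ = p ^ (k - (k+1)/2) := Nat.pow_div (by omega) hppos
      _ = p ^ (v / 2) := by congr 1; omega
      _ ≤ 2 * (if p = 2 then 2 else 1) * p ^ (v / 2) := by
          have : 1 ≤ 2 * (if p = 2 then 2 else 1 : ℕ) := by omega
          exact Nat.le_mul_of_pos_left _ (by omega)
  · -- v < k
    have hyv1 : ¬ ((p ^ (v+1) : ℕ) : ℤ) ∣ y := by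
      intro h
      have h2 : ((p ^ (v+1) : ℕ) : ℤ) ∣ ((p^k : ℕ) : ℤ) := by
        exact_mod_cast (pow_dvd_pow p (by omega) : p^(v+1) ∣ p^k)
      have h3 : (p ^ (v+1) : ℕ) ∣ Int.gcd y ((p^k : ℕ) : ℤ) := by
        exact_mod_cast Int.dvd_gcd h h2
      rw [hv] at h3
      have := (Nat.pow_dvd_pow_iff_le_right hp1).1 h3
      omega
    have hane : a ≠ 0 := by
      rintro rfl
      apply hyv1
      have : ((p^k : ℕ) : ℤ) ∣ y := by simpa using (dvd_neg.2 hady)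
      exact dvd_trans (by exact_mod_cast (pow_dvd_pow p (by omega) : p^(v+1) ∣ p^k)) this
    set w := a.factorization p with hw
    -- v = 2w
    have hpa2 : (p ^ v : ℕ) ∣ a ^ 2 := by
      have h1 : ((p^v : ℕ) : ℤ) ∣ (a:ℤ)^2 := by
        have hdvd : ((p^v : ℕ) : ℤ) ∣ (a:ℤ)^2 - y :=
          dvd_trans (by exact_mod_cast (pow_dvd_pow p hvk)) hady
        have := dvd_add hdvd hyv
        simpa using this
      exact_mod_cast h1
    have hpa2' : ¬ (p ^ (v+1) : ℕ) ∣ a ^ 2 := by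
      intro h
      apply hyv1
      have h1 : ((p^(v+1) : ℕ) : ℤ) ∣ (a:ℤ)^2 - y :=
        dvd_trans (by exact_mod_cast (pow_dvd_pow p (by omega) : p^(v+1) ∣ p^k)) hady
      have h2 : ((p^(v+1) : ℕ) : ℤ) ∣ (a:ℤ)^2 := by exact_mod_cast h
      have := dvd_sub h2 h1
      simpa using this
    have hfa2 : (a^2).factorization p = 2 * w := by
      rw [Nat.factorization_pow, Finsupp.smul_apply, smul_eq_mul]
    have hvw : v = 2 * w := by
      have h1 : v ≤ 2 * w := by
        have := (Nat.Prime.pow_dvd_iff_le_factorization hp (pow_ne_zero 2 hane)).1 hpa2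
        rwa [hfa2] at this
      have h2 : ¬ (v + 1 ≤ 2 * w) := by
        intro h
        exact hpa2' ((Nat.Prime.pow_dvd_iff_le_factorization hp (pow_ne_zero 2 hane)).2
          (by rwa [hfa2]))
      omega
    set δ : ℕ := if p = 2 then 1 else 0 with hδ
    have h2fac : (2 * a).factorization p = δ + w := by
      rw [Nat.factorization_mul (by norm_num) hane, Finsupp.add_apply]
      congr 1
      by_cases hp2 : p = 2
      · subst hp2; simp [hδ, Nat.Prime.factorization_self Nat.prime_two]
      · rw [hδ, if_neg hp2]
        exact Nat.factorization_eq_zero_of_not_dvd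
          (fun h => hp2 ((Nat.prime_dvd_prime_iff_eq hp Nat.prime_two).1 h))
    have hwdk : w + δ ≤ k := by
      have : δ ≤ 1 := by rw [hδ]; split <;> omega
      omega
    -- the key congruence claim
    have hclaim : ∀ b ∈ S, ((p ^ (k - w - δ) : ℕ) : ℤ) ∣ (b:ℤ) - (a:ℤ)
        ∨ ((p ^ (k - w - δ) : ℕ) : ℤ) ∣ (b:ℤ) - (-(a:ℤ)) := by
      intro b hbS
      have hb := Finset.mem_filter.1 hbS
      have hbdy : ((p^k : ℕ) : ℤ) ∣ (b:ℤ)^2 - y := hb.2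
      by_cases hba : (b:ℤ) = (a:ℤ)
      · left; rw [hba, sub_self]; exact dvd_zero _
      have hbne : b ≠ 0 := by
        rintro rfl
        apply hyv1
        have : ((p^k : ℕ) : ℤ) ∣ y := by simpa using (dvd_neg.2 hbdy)
        exact dvd_trans (by exact_mod_cast (pow_dvd_pow p (by omega) : p^(v+1) ∣ p^k)) this
      set D : ℤ := (b:ℤ) - (a:ℤ) with hD
      set E : ℤ := (b:ℤ) + (a:ℤ) with hE
      have hDne : D ≠ 0 := sub_ne_zero.2 hba
      have hEne : E ≠ 0 := by
        have : (0:ℤ) < E := by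
          rw [hE]
          have : (0:ℤ) < (a:ℤ) := by exact_mod_cast Nat.pos_of_ne_zero hane
          positivity
        omega
      have hDE : ((p^k : ℕ) : ℤ) ∣ D * E := by
        have h1 := dvd_sub hbdy hady
        have h2 : (b:ℤ)^2 - y - ((a:ℤ)^2 - y) = D * E := by rw [hD, hE]; ring
        rwa [h2] at h1
      set s := D.natAbs.factorization p with hs
      set t := E.natAbs.factorization p with ht
      have hst : k ≤ s + t := by
        have h1 : (p^k : ℕ) ∣ (D * E).natAbs := Int.natCast_dvd.1 (by exact_mod_cast hDE)
        rw [Int.natAbs_mul] at h1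
        have h2 := (Nat.Prime.pow_dvd_iff_le_factorization hp
          (mul_ne_zero (Int.natAbs_ne_zero.2 hDne) (Int.natAbs_ne_zero.2 hEne))).1 h1
        rwa [Nat.factorization_mul (Int.natAbs_ne_zero.2 hDne) (Int.natAbs_ne_zero.2 hEne),
          Finsupp.add_apply] at h2
      have hps_dvd_D : ((p ^ s : ℕ) : ℤ) ∣ D := by
        have := (Nat.Prime.pow_dvd_iff_le_factorization hp (Int.natAbs_ne_zero.2 hDne)).2 le_rfl
        exact Int.natCast_dvd.2 (by exact_mod_cast this)
      have hpt_dvd_E : ((p ^ t : ℕ) : ℤ) ∣ E := by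
        have := (Nat.Prime.pow_dvd_iff_le_factorization hp (Int.natAbs_ne_zero.2 hEne)).2 le_rfl
        exact Int.natCast_dvd.2 (by exact_mod_cast this)
      rcases le_total s t with hstle | hstle
      · -- s small ⇒ t ≥ k - w - δ, right case
        have hsE : ((p ^ s : ℕ) : ℤ) ∣ E :=
          dvd_trans (by exact_mod_cast pow_dvd_pow p hstle) hpt_dvd_E
        have h2a : ((p ^ s : ℕ) : ℤ) ∣ ((2 * a : ℕ) : ℤ) := by
          have := dvd_sub hsE hps_dvd_D
          have heq : E - D = ((2 * a : ℕ) : ℤ) := by rw [hD, hE]; push_cast; ring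
          rwa [heq] at this
        have hsle : s ≤ δ + w := by
          have := (Nat.Prime.pow_dvd_iff_le_factorization hp
            (by omega : 2 * a ≠ 0)).1 (Int.natCast_dvd_natCast.1 h2a)
          rwa [h2fac] at this
        right
        have htge : k - w - δ ≤ t := by omega
        have : ((p ^ (k - w - δ) : ℕ) : ℤ) ∣ E :=
          dvd_trans (by exact_mod_cast pow_dvd_pow p htge) hpt_dvd_E
        rwa [sub_neg_eq_add]
      · -- t small ⇒ s ≥ k - w - δ, left case
        have htD : ((p ^ t : ℕ) : ℤ) ∣ D :=
          dvd_trans (by exact_mod_cast pow_dvd_pow p hstle) hps_dvd_D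
        have h2a : ((p ^ t : ℕ) : ℤ) ∣ ((2 * a : ℕ) : ℤ) := by
          have := dvd_sub hpt_dvd_E htD
          have heq : E - D = ((2 * a : ℕ) : ℤ) := by rw [hD, hE]; push_cast; ring
          rwa [heq] at this
        have htle : t ≤ δ + w := by
          have := (Nat.Prime.pow_dvd_iff_le_factorization hp
            (by omega : 2 * a ≠ 0)).1 (Int.natCast_dvd_natCast.1 h2a)
          rwa [h2fac] at this
        left
        have hsge : k - w - δ ≤ s := by omega
        exact dvd_trans (by exact_mod_cast pow_dvd_pow p hsge) hps_dvd_D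
    -- counting
    have hsub : S ⊆ ((Finset.range (p^k)).filter
          (fun b : ℕ => ((p ^ (k - w - δ) : ℕ) : ℤ) ∣ (b:ℤ) - (a:ℤ)))
        ∪ ((Finset.range (p^k)).filter
          (fun b : ℕ => ((p ^ (k - w - δ) : ℕ) : ℤ) ∣ (b:ℤ) - (-(a:ℤ)))) := by
      intro b hb
      rcases hclaim b hb with h | h
      · exact Finset.mem_union_left _ (Finset.mem_filter.2
          ⟨(Finset.mem_filter.1 hb).1, h⟩)
      · exact Finset.mem_union_right _ (Finset.mem_filter.2
          ⟨(Finset.mem_filter.1 hb).1, h⟩)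
    have hMdvd : p ^ (k - w - δ) ∣ p ^ k := pow_dvd_pow p (by omega)
    have hc1 := count_cong (p^k) (p^(k-w-δ)) (by positivity) hMdvd ((a:ℤ))
    have hc2 := count_cong (p^k) (p^(k-w-δ)) (by positivity) hMdvd (-(a:ℤ))
    have hdivval : p ^ k / p ^ (k - w - δ) = p ^ (w + δ) := by
      rw [Nat.pow_div (by omega) hppos]
      congr 1; omega
    rw [hSeq]
    calc S.card ≤ _ := Finset.card_le_card hsub
      _ ≤ _ := Finset.card_union_le _ _
      _ ≤ p ^ (w + δ) + p ^ (w + δ) := by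
          rw [← hdivval]; exact Nat.add_le_add hc1 hc2
      _ ≤ 2 * (if p = 2 then 2 else 1) * p ^ (v / 2) := by
          have hv2 : v / 2 = w := by omega
          rw [hv2]
          by_cases hp2 : p = 2
          · subst hp2
            rw [hδ, if_pos rfl, if_pos rfl]
            exact le_of_eq (by ring)
          · rw [hδ, if_neg hp2, if_neg hp2]
            exact le_of_eq (by ring)



lemma ScardN_eq_card (y : ℤ) (c : ℕ) [NeZero c] :
    ScardN y c = Fintype.card {x : ZMod c // x ^ 2 = (y : ZMod c)} := by
  rw [Fintype.card_subtype]
  refine Finset.card_bij (fun (a : ℕ) _ => ((a : ZMod c))) ?_ ?_ ?_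
  · intro a ha
    simp only [ScardN, Finset.mem_filter, Finset.mem_range] at ha
    simp only [Finset.mem_filter, Finset.mem_univ, true_and]
    have := (ZMod.intCast_zmod_eq_zero_iff_dvd ((a:ℤ)^2 - y) c).2 ha.2
    push_cast at this
    linear_combination this
  · intro a ha b hb h
    simp only [ScardN, Finset.mem_filter, Finset.mem_range] at ha hb
    rwa [ZMod.natCast_eq_natCast_iff', Nat.mod_eq_of_lt ha.1, Nat.mod_eq_of_lt hb.1] at h
  · intro z hz
    simp only [Finset.mem_filter, Finset.mem_univ, true_and] at hz
    refine ⟨z.val, ?_, (ZMod.natCast_rightInverse z)⟩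
    simp only [ScardN, Finset.mem_filter, Finset.mem_range]
    refine ⟨ZMod.val_lt z, ?_⟩
    rw [← ZMod.intCast_zmod_eq_zero_iff_dvd]
    push_cast
    rw [ZMod.natCast_rightInverse z, hz, sub_self]

lemma ScardN_mul (y : ℤ) {a b : ℕ} (hab : Nat.Coprime a b) (ha : a ≠ 0) (hb : b ≠ 0) :
    ScardN y (a * b) = ScardN y a * ScardN y b := by
  haveI : NeZero a := ⟨ha⟩
  haveI : NeZero b := ⟨hb⟩
  haveI : NeZero (a * b) := ⟨mul_ne_zero ha hb⟩
  rw [ScardN_eq_card, ScardN_eq_card, ScardN_eq_card, ← Fintype.card_prod]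
  apply Fintype.card_congr
  refine Equiv.trans ((ZMod.chineseRemainder hab).toEquiv.subtypeEquiv (fun x => ?_))
    (Equiv.subtypeProdEquivProd (p := fun u : ZMod a => u ^ 2 = (y : ZMod a))
      (q := fun v : ZMod b => v ^ 2 = (y : ZMod b)))
  set e := ZMod.chineseRemainder hab
  have h1 : x ^ 2 = (y : ZMod (a*b)) ↔ e (x ^ 2) = e ((y : ZMod (a*b))) :=
    ⟨fun h => by rw [h], fun h => e.injective h⟩
  rw [h1, map_pow, map_intCast]
  constructor
  · intro h
    constructor
    · have := congrArg Prod.fst h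
      simpa using this
    · have := congrArg Prod.snd h
      simpa using this
  · intro ⟨h1, h2⟩
    ext
    · simpa using h1
    · simpa using h2


lemma gcd_nat_mul {n a b : ℕ} (hab : Nat.Coprime a b) :
    Nat.gcd n (a * b) = Nat.gcd n a * Nat.gcd n b := by
  apply Nat.dvd_antisymm
  · exact gcd_mul_dvd_mul_gcd n a b
  · have h1 : Nat.Coprime (Nat.gcd n a) (Nat.gcd n b) :=
      Nat.Coprime.coprime_dvd_left (Nat.gcd_dvd_right n a)
        (Nat.Coprime.coprime_dvd_right (Nat.gcd_dvd_right n b) hab)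
    exact Nat.dvd_gcd (h1.mul_dvd_of_dvd_of_dvd (Nat.gcd_dvd_left n a) (Nat.gcd_dvd_left n b))
      (mul_dvd_mul (Nat.gcd_dvd_right n a) (Nat.gcd_dvd_right n b))

lemma key_bound (y : ℤ) (c : ℕ) :
    (ScardN y c : ℝ) ≤ (if 2 ∣ c then 2 else 1) * 2 ^ c.primeFactors.card
      * Real.sqrt (Int.gcd y (c : ℤ)) := by
  induction c using Nat.recOnPosPrimePosCoprime with
  | prime_pow p k hpp hk =>
      have hg : Int.gcd y ((p ^ k : ℕ) : ℤ) ∣ p ^ k := by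
        have h := Int.gcd_dvd_right (a := y) (b := ((p ^ k : ℕ) : ℤ))
        exact_mod_cast h
      obtain ⟨v, hvk, hgv⟩ := (Nat.dvd_prime_pow hpp).1 hg
      have hb := ScardN_prime_pow hpp hk y hgv hvk
      have hppos : (0:ℝ) < p := by exact_mod_cast hpp.pos
      have hsq : ((p:ℝ)) ^ (v / 2) ≤ Real.sqrt ((p ^ v : ℕ) : ℝ) := by
        rw [Real.le_sqrt (by positivity) (by positivity)]
        push_cast
        rw [← pow_mul]
        exact pow_le_pow_right₀ (by exact_mod_cast hpp.one_le) (by omega)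
      have hω : (p ^ k).primeFactors.card = 1 := by
        rw [Nat.primeFactors_prime_pow (by omega) hpp, Finset.card_singleton]
      have h2dvd : (2 ∣ p ^ k) ↔ p = 2 := by
        constructor
        · intro h
          exact ((Nat.prime_dvd_prime_iff_eq Nat.prime_two hpp).1
            (Nat.Prime.dvd_of_dvd_pow Nat.prime_two h)).symm
        · rintro rfl
          exact dvd_pow_self 2 (by omega)
      have hεnn : (0:ℝ) ≤ (if p = 2 then 2 else 1) := by split <;> norm_num
      calc (ScardN y (p ^ k) : ℝ)
          ≤ ((2 * (if p = 2 then 2 else 1) * p ^ (v / 2) : ℕ) : ℝ) := by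
            exact_mod_cast hb
        _ = (if p = 2 then (2:ℝ) else 1) * 2 ^ 1 * (p:ℝ) ^ (v / 2) := by
            split <;> push_cast <;> ring
        _ ≤ (if p = 2 then (2:ℝ) else 1) * 2 ^ 1 * Real.sqrt ((p ^ v : ℕ) : ℝ) := by
            apply mul_le_mul_of_nonneg_left hsq (by positivity)
        _ = (if 2 ∣ p ^ k then (2:ℝ) else 1) * 2 ^ (p ^ k).primeFactors.card
              * Real.sqrt ((Int.gcd y ((p ^ k : ℕ) : ℤ) : ℕ) : ℝ) := by
            rw [hω, hgv]
            simp only [h2dvd]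
  | zero => simp [ScardN]
  | one =>
      have h1 : ScardN y 1 ≤ 1 := by
        have := Finset.card_filter_le (Finset.range 1)
          (fun x : ℕ => ((1 : ℕ) : ℤ) ∣ ((x:ℤ) ^ 2 - y))
        simpa [ScardN] using this
      have h2 : (ScardN y 1 : ℝ) ≤ 1 := by exact_mod_cast h1
      have hg1 : Int.gcd y ((1:ℕ):ℤ) = 1 := by simp [Int.gcd]
      simpa [Nat.primeFactors_one, hg1] using h2
  | coprime a b ha1 hb1 hab iha ihb =>
      have ha0 : a ≠ 0 := by omega
      have hb0 : b ≠ 0 := by omega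
      have hmul := ScardN_mul y hab ha0 hb0
      have hgcd : Int.gcd y ((a * b : ℕ) : ℤ) = Int.gcd y (a : ℤ) * Int.gcd y (b : ℤ) := by
        show y.natAbs.gcd ((a * b : ℕ) : ℤ).natAbs
            = y.natAbs.gcd ((a : ℕ) : ℤ).natAbs * y.natAbs.gcd ((b : ℕ) : ℤ).natAbs
        rw [Int.natAbs_natCast, Int.natAbs_natCast, Int.natAbs_natCast]
        exact gcd_nat_mul hab
      have hω : (a * b).primeFactors.card = a.primeFactors.card + b.primeFactors.card := by
        rw [Nat.primeFactors_mul ha0 hb0,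
          Finset.card_union_of_disjoint hab.disjoint_primeFactors]
      have hε : (if 2 ∣ a * b then (2:ℝ) else 1)
          = (if 2 ∣ a then (2:ℝ) else 1) * (if 2 ∣ b then (2:ℝ) else 1) := by
        by_cases h2a : 2 ∣ a <;> by_cases h2b : 2 ∣ b
        · exfalso
          have := Nat.dvd_gcd h2a h2b
          rw [Nat.Coprime] at hab
          omega
        · rw [if_pos (h2a.mul_right b), if_pos h2a, if_neg h2b]; ring
        · rw [if_pos (h2b.mul_left a), if_neg h2a, if_pos h2b]; ring
        · rw [if_neg (fun h => by
            rcases (Nat.Prime.dvd_mul Nat.prime_two).1 h with h' | h'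
            exacts [h2a h', h2b h']), if_neg h2a, if_neg h2b]; ring
      have hsq : Real.sqrt ((Int.gcd y ((a * b : ℕ) : ℤ) : ℕ) : ℝ)
          = Real.sqrt ((Int.gcd y (a : ℤ) : ℕ) : ℝ)
            * Real.sqrt ((Int.gcd y (b : ℤ) : ℕ) : ℝ) := by
        rw [← Real.sqrt_mul (by positivity)]
        congr 1
        rw [hgcd]
        push_cast
        ring
      have hnnA : (0:ℝ) ≤ (if 2 ∣ a then (2:ℝ) else 1) * 2 ^ a.primeFactors.card
          * Real.sqrt ((Int.gcd y (a : ℤ) : ℕ) : ℝ) := by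
        have : (0:ℝ) ≤ (if 2 ∣ a then (2:ℝ) else 1) := by split <;> norm_num
        positivity
      have hSnn : (0:ℝ) ≤ (ScardN y b : ℝ) := by positivity
      calc (ScardN y (a * b) : ℝ) = (ScardN y a : ℝ) * (ScardN y b : ℝ) := by
            rw [hmul]; push_cast; ring
        _ ≤ ((if 2 ∣ a then (2:ℝ) else 1) * 2 ^ a.primeFactors.card
              * Real.sqrt ((Int.gcd y (a : ℤ) : ℕ) : ℝ))
            * ((if 2 ∣ b then (2:ℝ) else 1) * 2 ^ b.primeFactors.card
              * Real.sqrt ((Int.gcd y (b : ℤ) : ℕ) : ℝ)) :=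
            mul_le_mul iha ihb hSnn hnnA
        _ = (if 2 ∣ a * b then (2:ℝ) else 1) * 2 ^ (a * b).primeFactors.card
              * Real.sqrt ((Int.gcd y ((a * b : ℕ) : ℤ) : ℕ) : ℝ) := by
            rw [hε, hω, hsq, pow_add]
            ring

/-- `R(y,c) ≤ 2^{ω(c)+1} gcd(y,c)^{1/2}`. -/
theorem sqrt_count_bound
    (y : ℤ) (c : ℕ) (hc : 1 ≤ c) :
    (((Finset.range c).filter (fun x => (c : ℤ) ∣ ((x : ℤ) ^ 2 - y))).card : ℝ)
      ≤ 2 ^ (c.primeFactors.card + 1) * Real.sqrt (Int.gcd y (c : ℤ)) := by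
  have hset : ((do let a ← Finset.range c; pure ((a:ℤ))) : Finset ℤ)
      = (Finset.range c).image (fun n : ℕ => (n:ℤ)) := by
    ext x; simp [Bind.bind]
  have hcards : ((Finset.range c).filter (fun x => (c : ℤ) ∣ ((x : ℤ) ^ 2 - y))).card
      = ScardN y c := by
    rw [show ((Finset.range c).filter (fun x => (c : ℤ) ∣ ((x : ℤ) ^ 2 - y)))
        = (((Finset.range c).image (fun n : ℕ => (n:ℤ))).filter
            (fun x : ℤ => (c : ℤ) ∣ (x ^ 2 - y))) from by rw [← hset],
      Finset.filter_image,
      Finset.card_image_of_injective _ (fun a b h => by exact_mod_cast h)]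
    rfl
  rw [hcards]
  have hkey := key_bound y c
  have h2 : ((if 2 ∣ c then 2 else 1 : ℝ)) ≤ 2 := by split <;> norm_num
  calc (ScardN y c : ℝ) ≤ _ := hkey
    _ ≤ 2 * 2 ^ c.primeFactors.card * Real.sqrt ((Int.gcd y (c : ℤ) : ℕ) : ℝ) := by
        apply mul_le_mul_of_nonneg_right _ (Real.sqrt_nonneg _)
        exact mul_le_mul_of_nonneg_right h2 (by positivity)
    _ = 2 ^ (c.primeFactors.card + 1) * Real.sqrt ((Int.gcd y (c : ℤ) : ℕ) : ℝ) := by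
        rw [pow_succ]; ring
end

section
/- Let λ ≥ 2 be an integer and let n be an integer. Then Σ_{d mod 2^λ, d odd} χ(d)·e_{2^λ}(dn) equals 2^(λ−1)·i·ε(n/2^(λ−2)) if 2^(λ−2) divides n, and equals 0 otherwise. Here χ(d) = 1 if d ≡ 1 (mod 4) and χ(d) = −1 if d ≡ 3 (mod 4), and ε(x) = 1 if x ≡ 1 (mod 4), ε(x) = −1 if x ≡ 3 (mod 4), and ε(x) = 0 if x is even. -/
open scoped BigOperators Classical

lemma ec_add' (c : ℤ) (x y : ℚ) : ec c (x + y) = ec c x * ec c y := by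
  unfold ec
  rw [← Complex.exp_add]
  congr 1
  push_cast
  ring

lemma ec_nat_mul' (c : ℤ) (k : ℕ) (x : ℚ) : ec c ((k : ℚ) * x) = ec c x ^ k := by
  unfold ec
  rw [← Complex.exp_nat_mul]
  congr 1
  push_cast
  ring

lemma ec_self_mul (c : ℤ) (hc : (c : ℂ) ≠ 0) (q : ℤ) : ec c ((c : ℚ) * (q : ℚ)) = 1 := by
  unfold ec
  rw [show 2 * (Real.pi : ℂ) * Complex.I * ((((c : ℚ) * (q : ℚ)) : ℚ) : ℂ) / (c : ℂ)
      = (q : ℂ) * (2 * (Real.pi : ℂ) * Complex.I) by push_cast; field_simp]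
  exact Complex.exp_int_mul_two_pi_mul_I q

lemma ec_mod (c : ℤ) (hc : (c : ℂ) ≠ 0) (x : ℚ) (q : ℤ) : ec c (x + (c : ℚ) * (q : ℚ)) = ec c x := by
  rw [ec_add', ec_self_mul c hc q, mul_one]

lemma ec_cancel (c d : ℤ) (hc : (c : ℂ) ≠ 0) (x : ℚ) : ec (c * d) ((c : ℚ) * x) = ec d x := by
  unfold ec
  congr 1
  push_cast
  rw [show 2 * (Real.pi : ℂ) * Complex.I * ((c : ℂ) * (x : ℂ))
      = (c : ℂ) * (2 * (Real.pi : ℂ) * Complex.I * (x : ℂ)) by ring,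
    mul_div_mul_left _ _ hc]

lemma sum_ec_geom (N : ℕ) (hN : 0 < N) (n : ℤ) :
    ∑ k ∈ Finset.range N, (ec (N : ℤ) ((n : ℚ))) ^ k = if (N : ℤ) ∣ n then (N : ℂ) else 0 := by
  have hNc : ((N : ℤ) : ℂ) ≠ 0 := by exact_mod_cast Nat.cast_ne_zero.mpr hN.ne'
  by_cases h : (N : ℤ) ∣ n
  · obtain ⟨t, ht⟩ := h
    have h1 : ec (N : ℤ) ((n : ℚ)) = 1 := by
      rw [show ((n : ℚ)) = (((N : ℤ) : ℚ)) * ((t : ℚ)) by rw [ht]; push_cast; ring]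
      exact ec_self_mul _ hNc t
    rw [Finset.sum_congr rfl (fun k _ => by rw [h1, one_pow]), if_pos ⟨t, ht⟩]
    simp
  · rw [if_neg h]
    have hζ : ec (N : ℤ) ((n : ℚ)) ≠ 1 := by
      intro hone
      apply h
      unfold ec at hone
      rw [Complex.exp_eq_one_iff] at hone
      obtain ⟨k, hk⟩ := hone
      have hπ : (2 * (Real.pi : ℂ) * Complex.I) ≠ 0 := by
        simp [Real.pi_ne_zero, Complex.I_ne_zero]
      have hNc' : ((N : ℤ) : ℂ) ≠ 0 := hNc
      rw [div_eq_iff hNc'] at hk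
      push_cast at hk
      have h2 : ((n : ℤ) : ℂ) = (k : ℂ) * (((N : ℤ)) : ℂ) := by
        apply mul_left_cancel₀ hπ
        linear_combination hk
      have h3 : n = k * (N : ℤ) := by exact_mod_cast h2
      exact ⟨k, by rw [h3]; ring⟩
    have hpow : (ec (N : ℤ) ((n : ℚ))) ^ N = 1 := by
      rw [← ec_nat_mul']
      rw [show ((N : ℚ) * (n : ℚ)) = (((N : ℤ)) : ℚ) * ((n : ℚ)) by push_cast; ring]
      exact ec_self_mul _ hNc n
    rw [geom_sum_eq hζ, hpow, sub_self, zero_div]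

lemma ec4_zero : ec 4 (0:ℚ) = 1 := by simp [ec]

lemma ec4_one : ec 4 (1:ℚ) = Complex.I := by
  unfold ec
  rw [show 2 * (Real.pi:ℂ) * Complex.I * ((1:ℚ):ℂ) / ((4:ℤ):ℂ)
      = ((Real.pi/2 : ℝ):ℂ) * Complex.I by push_cast; ring]
  rw [Complex.exp_mul_I, ← Complex.ofReal_cos, ← Complex.ofReal_sin,
    Real.cos_pi_div_two, Real.sin_pi_div_two]
  simp

lemma ec4_two : ec 4 (2:ℚ) = -1 := by
  unfold ec
  rw [show 2 * (Real.pi:ℂ) * Complex.I * ((2:ℚ):ℂ) / ((4:ℤ):ℂ)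
      = ((Real.pi : ℝ):ℂ) * Complex.I by push_cast; ring]
  exact Complex.exp_pi_mul_I

lemma ec4_three : ec 4 (3:ℚ) = -Complex.I := by
  rw [show (3:ℚ) = 2 + 1 by norm_num, ec_add', ec4_one, ec4_two]
  ring

lemma ec4_int (t : ℤ) :
    ec 4 ((t:ℚ)) = if t % 4 = 0 then 1 else if t % 4 = 1 then Complex.I
      else if t % 4 = 2 then -1 else -Complex.I := by
  have hme := Int.emod_add_mul_ediv t 4
  have key : ec 4 ((t:ℚ)) = ec 4 (((t % 4 : ℤ) : ℚ)) := by
    rw [show ((t:ℚ)) = ((t % 4 : ℤ) : ℚ) + ((4:ℤ):ℚ) * ((t/4 : ℤ):ℚ) by exact_mod_cast hme.symm]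
    exact ec_mod 4 (by norm_num) _ _
  have h4 : t % 4 = 0 ∨ t % 4 = 1 ∨ t % 4 = 2 ∨ t % 4 = 3 := by omega
  rcases h4 with h|h|h|h <;> rw [key, h] <;>
    norm_num [ec4_zero, ec4_one, ec4_two, ec4_three]

/-- the twisted exponential sum evaluation modulo `2^λ`
(equation (3.15) of the paper). -/
theorem twisted_exp_sum_two_adic
    (lam : ℕ) (hlam : 2 ≤ lam) (n : ℤ) :
    (∑ d ∈ Finset.range (2 ^ lam),
        if d % 2 = 1 then
          (if (d : ℤ) % 4 = 1 then (1 : ℂ) else -1) * ec ((2 : ℤ) ^ lam) ((d : ℚ) * (n : ℚ))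
        else 0)
      = if (2 : ℤ) ^ (lam - 2) ∣ n then
          (2 : ℂ) ^ (lam - 1) * Complex.I *
            (if (n / 2 ^ (lam - 2)) % 4 = 1 then (1 : ℂ)
             else if (n / 2 ^ (lam - 2)) % 4 = 3 then -1 else 0)
        else 0 := by
  set N : ℕ := 2 ^ (lam - 2) with hN
  have hNpos : 0 < N := Nat.pow_pos (by norm_num)
  have hpow : (2:ℕ) ^ lam = N * 4 := by
    rw [hN]
    conv_lhs => rw [show lam = (lam - 2) + 2 by omega]
    rw [pow_add]
    norm_num
  have hNZ : ((N : ℕ) : ℤ) = (2:ℤ) ^ (lam - 2) := by push_cast [hN]; ring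
  have hL4 : (2:ℤ) ^ lam = 4 * (N : ℤ) := by
    have := congrArg (Nat.cast : ℕ → ℤ) hpow
    push_cast at this
    linarith
  have hL4' : (2:ℤ) ^ lam = (2:ℤ) ^ (lam - 2) * 4 := by rw [hL4, hNZ]; ring
  set f : ℕ → ℂ := fun d => if d % 2 = 1 then
      (if (d : ℤ) % 4 = 1 then (1 : ℂ) else -1) * ec ((2:ℤ) ^ lam) ((d : ℚ) * (n : ℚ)) else 0
    with hf
  have step1 : ∑ d ∈ Finset.range (2 ^ lam), f d
      = ∑ p ∈ Finset.range N ×ˢ Finset.range 4, f (p.2 + 4 * p.1) := by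
    apply Finset.sum_nbij' (fun d => (d / 4, d % 4)) (fun p => p.2 + 4 * p.1)
    · intro a ha
      simp only [Finset.mem_range, Finset.mem_product] at *
      rw [hpow] at ha
      exact ⟨by omega, by omega⟩
    · intro p hp
      simp only [Finset.mem_range, Finset.mem_product] at *
      rw [hpow]
      omega
    · intro a _
      simp only
      omega
    · intro p hp
      simp only [Finset.mem_range, Finset.mem_product] at hp
      ext <;> simp <;> omega
    · intro a _
      simp only
      rw [Nat.mod_add_div a 4]
  rw [step1, Finset.sum_product]
  have hkey : ∀ x : ℚ, ec ((2:ℤ) ^ lam) ((4:ℚ) * x) = ec (N:ℤ) x := by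
    intro x
    rw [hL4, show ((4:ℚ)) = (((4:ℤ)):ℚ) by norm_num]
    exact ec_cancel 4 (N:ℤ) (by norm_num) x
  have inner : ∀ k ∈ Finset.range N, ∑ a ∈ Finset.range 4, f (a + 4 * k)
      = (ec ((2:ℤ) ^ lam) ((n:ℚ)) - ec ((2:ℤ) ^ lam) ((3:ℚ) * (n:ℚ)))
          * (ec (N:ℤ) ((n:ℚ))) ^ k := by
    intro k _
    rw [Finset.sum_range_succ, Finset.sum_range_succ, Finset.sum_range_succ,
        Finset.sum_range_succ, Finset.sum_range_zero]
    have h0 : f (0 + 4*k) = 0 := by rw [hf]; exact if_neg (by omega)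
    have h2 : f (2 + 4*k) = 0 := by rw [hf]; exact if_neg (by omega)
    have h1 : f (1 + 4*k) = ec ((2:ℤ) ^ lam) ((n:ℚ)) * (ec (N:ℤ) ((n:ℚ))) ^ k := by
      rw [hf]
      simp only
      rw [if_pos (by omega), if_pos (by push_cast; omega), one_mul]
      rw [show (((1 + 4*k : ℕ)):ℚ) * (n:ℚ) = (n:ℚ) + (k:ℚ) * ((4:ℚ) * (n:ℚ)) by push_cast; ring]
      rw [ec_add', ec_nat_mul', hkey]
    have h3 : f (3 + 4*k)
        = -(ec ((2:ℤ) ^ lam) ((3:ℚ) * (n:ℚ)) * (ec (N:ℤ) ((n:ℚ))) ^ k) := by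
      rw [hf]
      simp only
      rw [if_pos (by omega), if_neg (by push_cast; omega)]
      rw [show (((3 + 4*k : ℕ)):ℚ) * (n:ℚ) = (3:ℚ) * (n:ℚ) + (k:ℚ) * ((4:ℚ) * (n:ℚ)) by
        push_cast; ring]
      rw [ec_add', ec_nat_mul', hkey]
      ring
    rw [h0, h1, h2, h3]
    ring
  rw [Finset.sum_congr rfl inner, ← Finset.mul_sum, sum_ec_geom N hNpos n]
  by_cases h : (2:ℤ) ^ (lam - 2) ∣ n
  · rw [if_pos h, if_pos (by rw [hNZ]; exact h)]
    set t : ℤ := n / 2 ^ (lam - 2) with htdef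
    have htn : n = (2:ℤ) ^ (lam - 2) * t := (Int.mul_ediv_cancel' h).symm
    have hc2 : (((2:ℤ) ^ (lam - 2) : ℤ) : ℂ) ≠ 0 := by
      rw [Int.cast_ne_zero]
      positivity
    have hecn : ec ((2:ℤ) ^ lam) ((n:ℚ)) = ec 4 ((t:ℚ)) := by
      rw [show ((n:ℚ)) = (((2:ℤ) ^ (lam - 2) : ℤ):ℚ) * ((t:ℚ)) by rw [htn]; push_cast; ring]
      rw [hL4']
      exact ec_cancel _ 4 hc2 _
    have hec3n : ec ((2:ℤ) ^ lam) ((3:ℚ) * (n:ℚ)) = ec 4 (((3 * t : ℤ):ℚ)) := by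
      rw [show ((3:ℚ) * (n:ℚ)) = (((2:ℤ) ^ (lam - 2) : ℤ):ℚ) * (((3 * t : ℤ):ℚ)) by
        rw [htn]; push_cast; ring]
      rw [hL4']
      exact ec_cancel _ 4 hc2 _
    have h2lam : (2:ℂ) ^ (lam - 1) = 2 * (N:ℂ) := by
      rw [hN, show lam - 1 = (lam - 2) + 1 by omega, pow_add]
      push_cast
      ring
    rw [hecn, hec3n, ec4_int t, ec4_int (3*t), h2lam]
    have h4 : t % 4 = 0 ∨ t % 4 = 1 ∨ t % 4 = 2 ∨ t % 4 = 3 := by omega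
    rcases h4 with ht4|ht4|ht4|ht4
    · rw [ht4, show (3*t) % 4 = 0 by omega]
      norm_num
    · rw [ht4, show (3*t) % 4 = 3 by omega]
      norm_num
      ring
    · rw [ht4, show (3*t) % 4 = 2 by omega]
      norm_num
    · rw [ht4, show (3*t) % 4 = 1 by omega]
      norm_num
      ring
  · rw [if_neg h, if_neg (by rw [hNZ]; exact h), mul_zero]
end
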